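/- arXiv:2110.14296 — 7 statements merged into one kernel-verified Lean document; each statement's English description precedes it below -/
import Mathlib

section
/- Let n ∈ ℕ, r > 0, 0 < t_f ≤ ∞, and let x : [-r, t_f) → ℝⁿ be continuous and differentiable on [0, t_f). Suppose V : ℝⁿ → ℝ is differentiable and there exist constants c₁, c₂, α > 0 and q > 1 such that: (i) c₁·‖x(t)‖₂² ≤ V(x(t)) ≤ c₂·‖x(t)‖₂² for all t ∈ [-r, t_f); and (ii) for every t ∈ [0, t_f), if V(x(t+s)) ≤ q·V(x(t)) for all s ∈ [-r, 0], then the derivative of the map t ↦ V(x(t)) at t is at most -α·V(x(t)). Then, setting γ = min(α, (log q)/r)/2 and M = c₂/c₁, for all t, s with 0 ≤ t ≤ s < t_f one has ‖x(s)‖₂ ≤ M·e^{-γ(s-t)}·sup_{u ∈ [-r,0]} ‖x(t+u)‖₂. -/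
open Set

set_option maxHeartbeats 1000000 in
/-- Lyapunov–Razumikhin theorem: exponential decay along a trajectory of a
time-delay system. -/
theorem razumikhin_exponential_decay
    {n : ℕ} {r : ℝ} (hr : 0 < r) {tf : EReal} (htf : 0 < tf)
    (x : ℝ → EuclideanSpace ℝ (Fin n))
    (hxc : ContinuousOn x {u : ℝ | -r ≤ u ∧ (u : EReal) < tf})
    (hxd : ∀ t : ℝ, 0 ≤ t → (t : EReal) < tf → DifferentiableWithinAt ℝ x (Ici (0:ℝ)) t)
    (V : EuclideanSpace ℝ (Fin n) → ℝ) (hV : Differentiable ℝ V)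
    {c₁ c₂ α q : ℝ} (hc₁ : 0 < c₁) (hc₂ : 0 < c₂) (hα : 0 < α) (hq : 1 < q)
    (hsandwich : ∀ t : ℝ, -r ≤ t → (t : EReal) < tf →
      c₁ * ‖x t‖ ^ 2 ≤ V (x t) ∧ V (x t) ≤ c₂ * ‖x t‖ ^ 2)
    (hdecay : ∀ t : ℝ, 0 ≤ t → (t : EReal) < tf →
      (∀ s ∈ Icc (-r) (0:ℝ), V (x (t + s)) ≤ q * V (x t)) →
      derivWithin (fun u => V (x u)) (Ici (0:ℝ)) t ≤ -α * V (x t)) :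
    ∀ t s : ℝ, 0 ≤ t → t ≤ s → (s : EReal) < tf →
      ‖x s‖ ≤ (c₂ / c₁) * Real.exp (-(min α (Real.log q / r) / 2) * (s - t)) *
        ⨆ u : Icc (-r) (0:ℝ), ‖x (t + u.1)‖ := by
  intro t s ht hts hstf
  set β : ℝ := min α (Real.log q / r) with hβdef
  have hq0 : (0:ℝ) < q := lt_trans one_pos hq
  have hβ : 0 < β := lt_min hα (div_pos (Real.log_pos hq) hr)
  have hβα : β ≤ α := min_le_left _ _
  have hβr : β * r ≤ Real.log q := by
    have := min_le_right α (Real.log q / r)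
    calc β * r ≤ (Real.log q / r) * r := by nlinarith
    _ = Real.log q := by field_simp
  set W : ℝ → ℝ := fun u => V (x u) with hWdef
  set S : ℝ := ⨆ u : Icc (-r) (0:ℝ), ‖x (t + u.1)‖ with hSdef
  have hcoe : ∀ u : ℝ, u ≤ s → (u : EReal) < tf := fun u hu =>
    lt_of_le_of_lt (EReal.coe_le_coe_iff.mpr hu) hstf
  have hstf' : (s : EReal) < tf := hstf
  -- domain inclusion
  have hdom : ∀ u : ℝ, t - r ≤ u → u ≤ s → u ∈ {u : ℝ | -r ≤ u ∧ (u : EReal) < tf} := by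
    intro u h1 h2; exact ⟨by linarith, hcoe u h2⟩
  -- the sup S is a bound on ‖x u‖ for u ∈ [t-r, t]
  have hSbdd : BddAbove (Set.range fun u : Icc (-r) (0:ℝ) => ‖x (t + u.1)‖) := by
    have himg : BddAbove ((fun u : ℝ => ‖x (t + u)‖) '' Icc (-r) (0:ℝ)) := by
      apply IsCompact.bddAbove
      apply IsCompact.image_of_continuousOn isCompact_Icc
      apply ContinuousOn.norm
      apply hxc.comp ((continuous_const.add continuous_id).continuousOn)
      intro u hu
      exact hdom (t + u) (by have := hu.1; linarith) (by have := hu.2; linarith)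
    apply himg.mono
    rintro _ ⟨u, rfl⟩
    exact ⟨u.1, u.2, rfl⟩
  have hxS : ∀ u : ℝ, t - r ≤ u → u ≤ t → ‖x u‖ ≤ S := by
    intro u h1 h2
    have hmem : u - t ∈ Icc (-r) (0:ℝ) := ⟨by linarith, by linarith⟩
    have := le_ciSup hSbdd (⟨u - t, hmem⟩ : Icc (-r) (0:ℝ))
    simpa using this
  have hS0 : 0 ≤ S := le_trans (norm_nonneg _) (hxS t (by linarith) le_rfl)
  have hW0 : ∀ u : ℝ, -r ≤ u → (u : EReal) < tf → 0 ≤ W u := by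
    intro u h1 h2
    exact le_trans (by positivity) (hsandwich u h1 h2).1
  have hWS : ∀ u : ℝ, t - r ≤ u → u ≤ t → W u ≤ c₂ * S ^ 2 := by
    intro u h1 h2
    have h2' := (hsandwich u (by linarith) (hcoe u (by linarith))).2
    have := hxS u h1 h2
    have hWV : W u = V (x u) := rfl
    nlinarith [pow_le_pow_left₀ (norm_nonneg (x u)) this 2, hc₂.le]
  -- key exponential estimate with slack
  have key : ∀ κ : ℝ, 0 ≤ κ → κ < β → ∀ ε : ℝ, 0 < ε → ∀ s₀ : ℝ, t ≤ s₀ → s₀ ≤ s →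
      W s₀ * Real.exp (κ * (s₀ - t)) ≤ c₂ * S ^ 2 + ε := by
    intro κ hκ0 hκβ ε hε s₀ hts₀ hs₀s
    by_contra hcon
    push_neg at hcon
    set C : ℝ := c₂ * S ^ 2 + ε with hCdef
    have hC0 : 0 < C := by positivity
    set g : ℝ → ℝ := fun u => W u * Real.exp (κ * (u - t)) with hgdef
    have hexpq : ∀ z : ℝ, 0 ≤ z → z ≤ r → Real.exp (κ * z) ≤ q := by
      intro z h1 h2
      have : κ * z ≤ Real.log q := by nlinarith
      calc Real.exp (κ * z) ≤ Real.exp (Real.log q) := Real.exp_le_exp.mpr this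
      _ = q := Real.exp_log hq0
    -- g is continuous on [t-r, s₀]
    have hgc : ContinuousOn g (Icc (t - r) s₀) := by
      apply ContinuousOn.mul
      · exact hV.continuous.comp_continuousOn
          (hxc.mono (fun u hu => hdom u hu.1 (le_trans hu.2 hs₀s)))
      · exact (Real.continuous_exp.comp
          (continuous_const.mul (continuous_id.sub continuous_const))).continuousOn
    have hgt : g t < C := by
      have : W t ≤ c₂ * S ^ 2 := hWS t (by linarith) le_rfl
      simp only [hgdef, sub_self, mul_zero, Real.exp_zero, mul_one]
      linarith
    set B : Set ℝ := {u : ℝ | u ∈ Icc t s₀ ∧ C < g u} with hBdef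
    have hBne : B.Nonempty := ⟨s₀, ⟨⟨hts₀, le_rfl⟩, hcon⟩⟩
    have hBbdd : BddBelow B := ⟨t, fun u hu => hu.1.1⟩
    set s' : ℝ := sInf B with hs'def
    have hs'glb : IsGLB B s' := isGLB_csInf hBne hBbdd
    have hs'cl : s' ∈ closure B := hs'glb.mem_closure hBne
    have hs'Icc : s' ∈ Icc t s₀ := by
      have : closure B ⊆ Icc t s₀ :=
        closure_minimal (fun u hu => hu.1) isClosed_Icc
      exact this hs'cl
    have hs'sub : s' ∈ Icc (t - r) s₀ := ⟨by linarith [hs'Icc.1], hs'Icc.2⟩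
    have hnb : (nhdsWithin s' B).NeBot := mem_closure_iff_nhdsWithin_neBot.mp hs'cl
    -- g s' ≥ C by continuity from the right along B
    have hgs'ge : C ≤ g s' := by
      have htd : Filter.Tendsto g (nhdsWithin s' B) (nhds (g s')) :=
        ((hgc s' hs'sub).mono (fun u hu => ⟨by linarith [hu.1.1], hu.1.2⟩)).tendsto
      exact ge_of_tendsto htd (eventually_mem_nhdsWithin.mono fun u hu => hu.2.le)
    have hts' : t < s' := by
      rcases eq_or_lt_of_le hs'Icc.1 with h | h
      · exfalso; rw [← h] at hgs'ge; linarith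
      · exact h
    -- g ≤ C strictly below s'
    have hbelow : ∀ u : ℝ, t ≤ u → u < s' → g u ≤ C := by
      intro u h1 h2
      by_contra hgu
      push_neg at hgu
      exact absurd (hs'glb.1 ⟨⟨h1, by linarith [hs'Icc.2]⟩, hgu⟩) (not_le.mpr h2)
    -- g s' ≤ C by continuity from the left
    have hgs'le : g s' ≤ C := by
      have hnb2 : (nhdsWithin s' (Ico t s')).NeBot := by
        rw [← mem_closure_iff_nhdsWithin_neBot, closure_Ico (ne_of_lt hts')]
        exact ⟨le_of_lt hts', le_rfl⟩
      have htd : Filter.Tendsto g (nhdsWithin s' (Ico t s')) (nhds (g s')) :=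
        ((hgc s' hs'sub).mono (fun u hu => ⟨by linarith [hu.1], by linarith [hu.2, hs'Icc.2]⟩)).tendsto
      exact le_of_tendsto htd (eventually_mem_nhdsWithin.mono
        fun u hu => hbelow u hu.1 hu.2)
    have hgs' : g s' = C := le_antisymm hgs'le hgs'ge
    have hub : ∀ u : ℝ, t ≤ u → u ≤ s' → g u ≤ C := by
      intro u h1 h2
      rcases eq_or_lt_of_le h2 with h | h
      · rw [h, hgs']
      · exact hbelow u h1 h
    have hs'tf : (s' : EReal) < tf := hcoe s' (le_trans hs'Icc.2 hs₀s)
    have hgC : W s' * Real.exp (κ * (s' - t)) = C := hgs'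
    have hWs'pos : 0 < W s' := by
      by_contra h
      push_neg at h
      have he : (0:ℝ) < Real.exp (κ * (s' - t)) := Real.exp_pos _
      nlinarith
    -- Razumikhin condition at s'
    have hraz : ∀ u ∈ Icc (-r) (0:ℝ), V (x (s' + u)) ≤ q * V (x s') := by
      intro u hu
      show W (s' + u) ≤ q * W s'
      rcases le_or_gt t (s' + u) with hcase | hcase
      · -- s' + u ∈ [t, s']
        have h1 : W (s' + u) * Real.exp (κ * (s' + u - t)) ≤ C :=
          hub (s' + u) hcase (by linarith [hu.2])
        have he1 : (0:ℝ) < Real.exp (κ * (s' + u - t)) := Real.exp_pos _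
        have he3 : (0:ℝ) < Real.exp (κ * (-u)) := Real.exp_pos _
        have heq : Real.exp (κ * (s' - t)) =
            Real.exp (κ * (s' + u - t)) * Real.exp (κ * (-u)) := by
          rw [← Real.exp_add]; ring_nf
        have hle : Real.exp (κ * (-u)) ≤ q := hexpq (-u) (by linarith [hu.2]) (by linarith [hu.1])
        have hmain : W (s' + u) * Real.exp (κ * (s' + u - t)) ≤
            (q * W s') * Real.exp (κ * (s' + u - t)) := by
          calc W (s' + u) * Real.exp (κ * (s' + u - t)) ≤ C := h1
          _ = W s' * (Real.exp (κ * (s' + u - t)) * Real.exp (κ * (-u))) := by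
              rw [← hgC, heq]
          _ = (W s' * Real.exp (κ * (-u))) * Real.exp (κ * (s' + u - t)) := by ring
          _ ≤ (q * W s') * Real.exp (κ * (s' + u - t)) := by
              nlinarith [mul_le_mul_of_nonneg_right
                (mul_le_mul_of_nonneg_left hle hWs'pos.le) he1.le]
        exact le_of_mul_le_mul_right hmain he1
      · -- s' + u ∈ [t - r, t)
        have h1 : W (s' + u) ≤ c₂ * S ^ 2 :=
          hWS (s' + u) (by linarith [hu.1, hs'Icc.1]) (le_of_lt hcase)
        have hsr : s' - t < r := by linarith [hu.1]
        have hle : Real.exp (κ * (s' - t)) ≤ q :=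
          hexpq (s' - t) (by linarith) (le_of_lt hsr)
        have h3 : C ≤ q * W s' := by
          rw [← hgC]; nlinarith
        calc W (s' + u) ≤ c₂ * S ^ 2 := h1
        _ ≤ C := by simp only [hCdef]; linarith
        _ ≤ q * W s' := h3
    have hs'0 : (0:ℝ) ≤ s' := le_trans ht hs'Icc.1
    have hWder : derivWithin W (Ici (0:ℝ)) s' ≤ -α * W s' := hdecay s' hs'0 hs'tf hraz
    -- derivative of g at s'
    have hWd : DifferentiableWithinAt ℝ W (Ici (0:ℝ)) s' :=
      (hV (x s')).comp_differentiableWithinAt s' (hxd s' hs'0 hs'tf)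
    have hWh : HasDerivWithinAt W (derivWithin W (Ici (0:ℝ)) s') (Ici (0:ℝ)) s' :=
      hWd.hasDerivWithinAt
    have hexph : HasDerivAt (fun u : ℝ => Real.exp (κ * (u - t)))
        (Real.exp (κ * (s' - t)) * κ) s' := by
      have h1 : HasDerivAt (fun u : ℝ => κ * (u - t)) κ s' := by
        simpa using ((hasDerivAt_id s').sub_const t).const_mul κ
      exact h1.exp
    set d : ℝ := derivWithin W (Ici (0:ℝ)) s' * Real.exp (κ * (s' - t)) +
        W s' * (Real.exp (κ * (s' - t)) * κ) with hddef
    have hgh : HasDerivWithinAt g d (Ici (0:ℝ)) s' := hWh.mul hexph.hasDerivWithinAt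
    have hd0 : d < 0 := by
      have he : (0:ℝ) < Real.exp (κ * (s' - t)) := Real.exp_pos _
      have hstep : d ≤ (κ - α) * W s' * Real.exp (κ * (s' - t)) := by
        simp only [hddef]
        nlinarith [mul_le_mul_of_nonneg_right hWder he.le]
      have h2 : (κ - α) * W s' * Real.exp (κ * (s' - t)) < 0 := by
        have hκα : κ - α < 0 := by linarith
        nlinarith [mul_pos hWs'pos he]
      linarith
    -- slope along B is nonnegative, contradicting d < 0
    have hslope : Filter.Tendsto (slope g s') (nhdsWithin s' (Ici (0:ℝ) \ {s'})) (nhds d) :=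
      hasDerivWithinAt_iff_tendsto_slope.mp hgh
    have hBsub : B ⊆ Ici (0:ℝ) \ {s'} := by
      intro u hu
      constructor
      · exact le_trans ht hu.1.1
      · intro h
        simp only [mem_singleton_iff] at h
        rw [h] at hu
        exact absurd hu.2 (not_lt.mpr hgs'le)
    have hslope' : Filter.Tendsto (slope g s') (nhdsWithin s' B) (nhds d) :=
      hslope.mono_left (nhdsWithin_mono s' hBsub)
    have hd0' : 0 ≤ d := by
      apply ge_of_tendsto hslope'
      apply eventually_mem_nhdsWithin.mono
      intro u hu
      have hus' : s' < u := by
        rcases lt_or_eq_of_le (hs'glb.1 hu) with h | h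
        · exact h
        · exfalso; rw [← h] at hu; exact absurd hu.2 (not_lt.mpr hgs'le)
      have hgu : g s' < g u := by rw [hgs']; exact hu.2
      rw [slope_def_field]
      have : 0 < u - s' := by linarith
      apply le_of_lt
      exact div_pos (by linarith) this
    linarith
  -- pass to the limit ε → 0, then κ → β
  have key2 : ∀ κ : ℝ, 0 ≤ κ → κ < β → W s * Real.exp (κ * (s - t)) ≤ c₂ * S ^ 2 := by
    intro κ h1 h2
    apply le_of_forall_pos_le_add
    intro ε hε
    exact key κ h1 h2 ε hε s hts le_rfl
  have key3 : W s * Real.exp (β * (s - t)) ≤ c₂ * S ^ 2 := by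
    have htend : Filter.Tendsto (fun κ : ℝ => W s * Real.exp (κ * (s - t)))
        (nhdsWithin β (Iio β)) (nhds (W s * Real.exp (β * (s - t)))) := by
      apply Filter.Tendsto.mono_left _ nhdsWithin_le_nhds
      exact (continuous_const.mul (Real.continuous_exp.comp
        (continuous_id.mul continuous_const))).tendsto β
    apply le_of_tendsto htend
    have hmem : Ico (0:ℝ) β ∈ nhdsWithin β (Iio β) :=
      Ico_mem_nhdsLT_of_mem ⟨hβ, le_rfl⟩
    filter_upwards [hmem] with κ hκ
    exact key2 κ hκ.1 hκ.2
  -- conclude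
  have hlow : c₁ * ‖x s‖ ^ 2 ≤ W s := (hsandwich s (by linarith) hstf').1
  have hn2 : ‖x s‖ ^ 2 ≤ (c₂ / c₁) * Real.exp (-(β * (s - t))) * S ^ 2 := by
    have he : (0:ℝ) < Real.exp (β * (s - t)) := Real.exp_pos _
    rw [Real.exp_neg, show c₂ / c₁ * (Real.exp (β * (s - t)))⁻¹ * S ^ 2 =
      (c₂ * S ^ 2) / (c₁ * Real.exp (β * (s - t))) by field_simp,
      le_div_iff₀ (by positivity)]
    nlinarith [key3, mul_le_mul_of_nonneg_right hlow he.le]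
  by_cases hxs : ‖x s‖ = 0
  · rw [hxs]
    positivity
  · have hxsp : 0 < ‖x s‖ := lt_of_le_of_ne (norm_nonneg _) (Ne.symm hxs)
    have hc12 : c₁ ≤ c₂ := by
      have h1 := hlow
      have h2 := (hsandwich s (by linarith) hstf').2
      have hWV : W s = V (x s) := rfl
      nlinarith [pow_pos hxsp 2]
    have hM1 : (1:ℝ) ≤ c₂ / c₁ := (one_le_div hc₁).mpr hc12
    set E : ℝ := Real.exp (-(β / 2) * (s - t)) with hEdef
    have hE0 : 0 < E := Real.exp_pos _
    have hE2 : E ^ 2 = Real.exp (-(β * (s - t))) := by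
      rw [hEdef, sq, ← Real.exp_add]
      congr 1
      ring
    -- ‖x s‖ ≤ √(c₂/c₁) * E * S ≤ (c₂/c₁) * E * S
    have hsq : ‖x s‖ ^ 2 ≤ (Real.sqrt (c₂ / c₁) * E * S) ^ 2 := by
      have hsqrt : Real.sqrt (c₂ / c₁) ^ 2 = c₂ / c₁ :=
        Real.sq_sqrt (by positivity)
      calc ‖x s‖ ^ 2 ≤ (c₂ / c₁) * Real.exp (-(β * (s - t))) * S ^ 2 := hn2
      _ = (Real.sqrt (c₂ / c₁) * E * S) ^ 2 := by
        rw [mul_pow, mul_pow, hsqrt, hE2]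
    have h1 : ‖x s‖ ≤ Real.sqrt (c₂ / c₁) * E * S := by
      have hrhs : 0 ≤ Real.sqrt (c₂ / c₁) * E * S := by positivity
      nlinarith [hsq, norm_nonneg (x s)]
    have h2 : Real.sqrt (c₂ / c₁) ≤ c₂ / c₁ := by
      have : Real.sqrt (c₂ / c₁) ≤ Real.sqrt ((c₂ / c₁) ^ 2) :=
        Real.sqrt_le_sqrt (by nlinarith [mul_le_mul_of_nonneg_left hM1 (le_trans zero_le_one hM1)])
      rwa [Real.sqrt_sq (by positivity)] at this
    have hgoal : ‖x s‖ ≤ (c₂ / c₁) * E * S := by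
      calc ‖x s‖ ≤ Real.sqrt (c₂ / c₁) * E * S := h1
      _ ≤ (c₂ / c₁) * E * S := by
        nlinarith [mul_le_mul_of_nonneg_right (mul_le_mul_of_nonneg_right h2 hE0.le) hS0]
    exact hgoal
end

section
/- Let n ∈ ℕ, r > 0, L_f, γ, M, ε > 0, 0 < t_f < ∞, and let f : C_r → ℝⁿ be L_f-Lipschitz. Let S_train ⊆ S ⊆ C_r be sets of initial histories and set δ = ε·e^{-(L_f + γ)·t_f}. Assume: (a) every solution x on [-r, t_f) of ẋ(t) = f(x_t) with initial history ψ ∈ S_train satisfies ‖x(t)‖₂ ≤ M·e^{-γ·t}·‖ψ‖_r for all t ∈ [0, t_f); and (b) for every ψ̃ ∈ S there exists ψ ∈ S_train with ‖ψ̃ - ψ‖_r ≤ δ and a solution on [-r, t_f) with initial history ψ. Then every solution x̃ on [-r, t_f) with initial history ψ̃ ∈ S satisfying ‖ψ̃‖_r > ε obeys ‖x̃(t)‖₂ ≤ (2M + 1)·e^{-γ·t}·‖ψ̃‖_r for all t ∈ [0, t_f). -/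
open Set

set_option maxHeartbeats 1000000

/-- `IsSolution r tf f ψ x` means that `x : ℝ → ℝⁿ` is a solution on `[-r, tf)` of the
time-delay system `ẋ(t) = f(x_t)` with initial history `ψ ∈ C([-r,0], ℝⁿ)`. -/
def IsSolution {n : ℕ} (r tf : ℝ)
    (f : C(Icc (-r) (0:ℝ), EuclideanSpace ℝ (Fin n)) → EuclideanSpace ℝ (Fin n))
    (ψ : C(Icc (-r) (0:ℝ), EuclideanSpace ℝ (Fin n)))
    (x : ℝ → EuclideanSpace ℝ (Fin n)) : Prop :=
  ContinuousOn x (Ico (-r) tf) ∧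
  (∀ s : Icc (-r) (0:ℝ), x s.1 = ψ s) ∧
  ∀ t : ℝ, 0 ≤ t → t < tf →
    ∀ xt : C(Icc (-r) (0:ℝ), EuclideanSpace ℝ (Fin n)),
      (∀ s : Icc (-r) (0:ℝ), xt s = x (t + s.1)) →
      HasDerivWithinAt x (f xt) (Ico (-r) tf) t

/-- Covering / generalization part of the paper's Theorem 2: exponential decay on a
`δ`-covering training set of initial histories implies `(γ, 2M+1)`-exponential decay
on the covered set, away from an `ε`-ball around the origin. -/
theorem covering_exponential_decay
    {n : ℕ} {r Lf γ M ε tf : ℝ} (hr : 0 < r) (hLf : 0 < Lf) (hγ : 0 < γ)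
    (hM : 0 < M) (hε : 0 < ε) (htf : 0 < tf)
    (f : C(Icc (-r) (0:ℝ), EuclideanSpace ℝ (Fin n)) → EuclideanSpace ℝ (Fin n))
    (hf : LipschitzWith (Real.toNNReal Lf) f)
    (Strain S : Set (C(Icc (-r) (0:ℝ), EuclideanSpace ℝ (Fin n))))
    (hsub : Strain ⊆ S)
    (htrain : ∀ ψ ∈ Strain, ∀ x : ℝ → EuclideanSpace ℝ (Fin n),
      IsSolution r tf f ψ x →
      ∀ t : ℝ, 0 ≤ t → t < tf → ‖x t‖ ≤ M * Real.exp (-γ * t) * ‖ψ‖)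
    (hcover : ∀ ψ' ∈ S, ∃ ψ ∈ Strain,
      ‖ψ' - ψ‖ ≤ ε * Real.exp (-(Lf + γ) * tf) ∧
      ∃ x : ℝ → EuclideanSpace ℝ (Fin n), IsSolution r tf f ψ x) :
    ∀ ψ' ∈ S, ε < ‖ψ'‖ →
      ∀ x' : ℝ → EuclideanSpace ℝ (Fin n), IsSolution r tf f ψ' x' →
        ∀ t : ℝ, 0 ≤ t → t < tf →
          ‖x' t‖ ≤ (2 * M + 1) * Real.exp (-γ * t) * ‖ψ'‖ := by
  intro ψ' hψ'S hεlt x' hx' t ht0 httf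
  obtain ⟨ψ, hψtr, hclose, x, hx⟩ := hcover ψ' hψ'S
  set δ : ℝ := ε * Real.exp (-(Lf + γ) * tf) with hδdef
  have hδpos : 0 < δ := mul_pos hε (Real.exp_pos _)
  have hδε : δ ≤ ε := by
    have h1 : Real.exp (-(Lf + γ) * tf) ≤ 1 := by
      rw [Real.exp_le_one_iff]; nlinarith
    nlinarith
  set c : ℝ := ‖ψ'‖ / ε with hcdef
  have hc1 : (1 : ℝ) < c := (one_lt_div hε).2 hεlt
  have hc0 : (0 : ℝ) < c := by linarith
  set g : ℝ → EuclideanSpace ℝ (Fin n) := fun u => x' u - x u with hgdef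
  -- history values are controlled by the covering radius
  have hgpast : ∀ u : ℝ, -r ≤ u → u ≤ 0 → ‖g u‖ ≤ δ := by
    intro u h1 h2
    have e1 : x' u = ψ' ⟨u, h1, h2⟩ := hx'.2.1 ⟨u, h1, h2⟩
    have e2 : x u = ψ ⟨u, h1, h2⟩ := hx.2.1 ⟨u, h1, h2⟩
    have hgu : g u = (ψ' - ψ) ⟨u, h1, h2⟩ := by
      show x' u - x u = _
      rw [ContinuousMap.sub_apply, ← e1, ← e2]
    rw [hgu]
    exact le_trans (ContinuousMap.norm_coe_le_norm _ _) hclose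
  -- history segment maps
  have hmem : ∀ u : ℝ, 0 ≤ u → u < tf → ∀ s : Icc (-r) (0:ℝ), u + s.1 ∈ Ico (-r) tf := by
    intro u hu0 hu1 s
    exact ⟨by linarith [s.2.1], by linarith [s.2.2]⟩
  have hcont : ∀ y : ℝ → EuclideanSpace ℝ (Fin n), ContinuousOn y (Ico (-r) tf) →
      ∀ u : ℝ, 0 ≤ u → u < tf → Continuous fun s : Icc (-r) (0:ℝ) => y (u + s.1) := by
    intro y hy u hu0 hu1
    exact hy.comp_continuous (continuous_const.add continuous_subtype_val) (hmem u hu0 hu1)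
  set X' : ℝ → C(Icc (-r) (0:ℝ), EuclideanSpace ℝ (Fin n)) := fun u =>
    if h : 0 ≤ u ∧ u < tf then ⟨fun s => x' (u + s.1), hcont x' hx'.1 u h.1 h.2⟩ else 0
    with hX'def
  set X : ℝ → C(Icc (-r) (0:ℝ), EuclideanSpace ℝ (Fin n)) := fun u =>
    if h : 0 ≤ u ∧ u < tf then ⟨fun s => x (u + s.1), hcont x hx.1 u h.1 h.2⟩ else 0
    with hXdef
  have hX' : ∀ u : ℝ, 0 ≤ u → u < tf → ∀ s : Icc (-r) (0:ℝ), X' u s = x' (u + s.1) := by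
    intro u h1 h2 s
    simp only [hX'def]
    rw [dif_pos (And.intro h1 h2)]
    rfl
  have hX : ∀ u : ℝ, 0 ≤ u → u < tf → ∀ s : Icc (-r) (0:ℝ), X u s = x (u + s.1) := by
    intro u h1 h2 s
    simp only [hXdef]
    rw [dif_pos (And.intro h1 h2)]
    rfl
  -- the key Grönwall-type estimate
  have key : ∀ T : ℝ, 0 ≤ T → T < tf → ‖g T‖ ≤ c * δ * Real.exp (Lf * T) := by
    intro T hT0 hTtf
    by_contra hcon
    push_neg at hcon
    set Bs : Set ℝ := {u | u ∈ Icc 0 T ∧ c * δ * Real.exp (Lf * u) ≤ ‖g u‖} with hBsdef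
    have hgcont : ContinuousOn g (Icc 0 T) := by
      apply (hx'.1.sub hx.1).mono
      intro u hu
      exact ⟨by linarith [hu.1], by linarith [hu.2]⟩
    have hφ : ContinuousOn (fun u => ‖g u‖ - c * δ * Real.exp (Lf * u)) (Icc 0 T) := by
      apply ContinuousOn.sub (continuous_norm.comp_continuousOn hgcont)
      exact (Continuous.continuousOn (by continuity))
    have hBclosed : IsClosed Bs := by
      have heq : Bs = Icc 0 T ∩ (fun u => ‖g u‖ - c * δ * Real.exp (Lf * u)) ⁻¹' Ici 0 := by
        ext u
        simp only [hBsdef, mem_setOf_eq, mem_inter_iff, mem_preimage, mem_Ici, sub_nonneg]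
      rw [heq]
      exact hφ.preimage_isClosed_of_isClosed isClosed_Icc isClosed_Ici
    have hne : Bs.Nonempty := ⟨T, ⟨hT0, le_refl T⟩, hcon.le⟩
    have hbdd : BddBelow Bs := ⟨0, fun u hu => hu.1.1⟩
    set t0 : ℝ := sInf Bs with ht0def
    have ht0B : t0 ∈ Bs := hBclosed.csInf_mem hne hbdd
    have ht00 : 0 ≤ t0 := ht0B.1.1
    have ht0T : t0 ≤ T := ht0B.1.2
    have ht0tf : t0 < tf := lt_of_le_of_lt ht0T hTtf
    have hlt : ∀ u : ℝ, 0 ≤ u → u < t0 → ‖g u‖ < c * δ * Real.exp (Lf * u) := by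
      intro u hu0 hut
      by_contra h
      push_neg at h
      exact (notMem_of_lt_csInf hut hbdd) ⟨⟨hu0, le_trans hut.le ht0T⟩, h⟩
    -- bound on the history norm
    have hXnorm : ∀ u : ℝ, 0 ≤ u → u < t0 → ‖X' u - X u‖ ≤ c * δ * Real.exp (Lf * u) := by
      intro u hu0 hut0
      have hutf : u < tf := lt_trans hut0 ht0tf
      have hexp1 : (1 : ℝ) ≤ Real.exp (Lf * u) := by
        rw [Real.one_le_exp_iff]; positivity
      have hpos : 0 ≤ c * δ * Real.exp (Lf * u) :=
        mul_nonneg (mul_nonneg hc0.le hδpos.le) (Real.exp_pos _).le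
      rw [ContinuousMap.norm_le _ hpos]
      intro s
      have hs : (X' u - X u) s = g (u + s.1) := by
        rw [ContinuousMap.sub_apply, hX' u hu0 hutf s, hX u hu0 hutf s]
      rw [hs]
      rcases le_total (u + s.1) 0 with hcase | hcase
      · have h1 : -r ≤ u + s.1 := by linarith [s.2.1]
        have h2 := hgpast _ h1 hcase
        have h3 := mul_le_mul_of_nonneg_left hexp1 (mul_nonneg hc0.le hδpos.le)
        have h4 := mul_lt_mul_of_pos_right hc1 hδpos
        linarith
      · have h2 : u + s.1 < t0 := lt_of_le_of_lt (by linarith [s.2.2]) hut0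
        have h3 := hlt _ hcase h2
        have h4 : Real.exp (Lf * (u + s.1)) ≤ Real.exp (Lf * u) := by
          apply Real.exp_le_exp.2
          nlinarith [s.2.1, s.2.2]
        have h5 := mul_le_mul_of_nonneg_left h4 (mul_nonneg hc0.le hδpos.le)
        linarith
    -- one-sided derivative of g
    have hderiv : ∀ u ∈ Ico (0:ℝ) t0,
        HasDerivWithinAt g (f (X' u) - f (X u)) (Ici u) u := by
      rintro u ⟨hu0, hut0⟩
      have hutf : u < tf := lt_trans hut0 ht0tf
      have d1 : HasDerivWithinAt x' (f (X' u)) (Ico (-r) tf) u :=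
        hx'.2.2 u hu0 hutf (X' u) (hX' u hu0 hutf)
      have d2 : HasDerivWithinAt x (f (X u)) (Ico (-r) tf) u :=
        hx.2.2 u hu0 hutf (X u) (hX u hu0 hutf)
      have hsubset : Ico u tf ⊆ Ico (-r) tf := Ico_subset_Ico (by linarith) le_rfl
      have hm : Ico u tf ∈ nhdsWithin u (Ici u) :=
        Ico_mem_nhdsGE_of_mem ⟨le_refl u, hutf⟩
      exact ((d1.sub d2).mono hsubset).mono_of_mem_nhdsWithin hm
    -- derivative bound
    have hbound : ∀ u ∈ Ico (0:ℝ) t0,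
        ‖f (X' u) - f (X u)‖ ≤ Lf * (c * δ * Real.exp (Lf * u)) := by
      rintro u ⟨hu0, hut0⟩
      have h1 : ‖f (X' u) - f (X u)‖ ≤ Lf * ‖X' u - X u‖ := by
        have h := hf.dist_le_mul (X' u) (X u)
        rw [dist_eq_norm, dist_eq_norm] at h
        rwa [Real.coe_toNNReal _ hLf.le] at h
      have h2 := hXnorm u hu0 hut0
      nlinarith [norm_nonneg (X' u - X u)]
    -- boundary function derivative
    have hBder : ∀ u : ℝ,
        HasDerivAt (fun v : ℝ => c * δ * Real.exp (Lf * v) - (c - 1) * δ)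
          (Lf * (c * δ * Real.exp (Lf * u))) u := by
      intro u
      have h1 : HasDerivAt (fun v : ℝ => Lf * v) Lf u := by
        simpa using (hasDerivAt_id u).const_mul Lf
      have h3 := (h1.exp.const_mul (c * δ)).sub_const ((c - 1) * δ)
      convert h3 using 1
      · rfl
      · rfl
      · ring
    have hg0 : ‖g 0‖ ≤ c * δ * Real.exp (Lf * 0) - (c - 1) * δ := by
      have h1 := hgpast 0 (by linarith) le_rfl
      have h2 : c * δ * Real.exp (Lf * 0) - (c - 1) * δ = δ := by
        rw [mul_zero, Real.exp_zero]; ring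
      linarith
    have hgIcc : ContinuousOn g (Icc 0 t0) := hgcont.mono (Icc_subset_Icc le_rfl ht0T)
    have hfence := image_norm_le_of_norm_deriv_right_le_deriv_boundary
      hgIcc hderiv hg0 hBder hbound (right_mem_Icc.2 ht00)
    have hB2 : c * δ * Real.exp (Lf * t0) ≤ ‖g t0‖ := ht0B.2
    nlinarith [mul_pos (sub_pos.2 hc1) hδpos]
  -- assemble the final estimate
  have hgt := key t ht0 httf
  have hxt := htrain ψ hψtr x hx t ht0 httf
  have hψle : ‖ψ‖ ≤ 2 * ‖ψ'‖ := by
    have h1 : |‖ψ'‖ - ‖ψ‖| ≤ ‖ψ' - ψ‖ := abs_norm_sub_norm_le ψ' ψ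
    have h2 := abs_le.1 h1
    linarith [h2.1, hδε, hεlt, hclose]
  have hcδ : c * δ * Real.exp (Lf * t) ≤ Real.exp (-γ * t) * ‖ψ'‖ := by
    have hceq : c * δ = ‖ψ'‖ * Real.exp (-(Lf + γ) * tf) := by
      rw [hcdef, hδdef]; field_simp
    rw [hceq]
    have h2 : ‖ψ'‖ * Real.exp (-(Lf + γ) * tf) * Real.exp (Lf * t)
        = ‖ψ'‖ * Real.exp (-(Lf + γ) * tf + Lf * t) := by
      rw [Real.exp_add]; ring
    rw [h2]
    have hexp : Real.exp (-(Lf + γ) * tf + Lf * t) ≤ Real.exp (-γ * t) := by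
      apply Real.exp_le_exp.2
      nlinarith
    nlinarith [norm_nonneg ψ', Real.exp_pos (-γ * t),
      Real.exp_pos (-(Lf + γ) * tf + Lf * t)]
  have htri : ‖x' t‖ ≤ ‖x t‖ + ‖g t‖ := by
    have hx'eq : x' t = x t + g t := by
      show x' t = x t + (x' t - x t)
      abel
    rw [hx'eq]
    exact norm_add_le _ _
  have hfin : M * Real.exp (-γ * t) * (2 * ‖ψ'‖) + Real.exp (-γ * t) * ‖ψ'‖
      = (2 * M + 1) * Real.exp (-γ * t) * ‖ψ'‖ := by ring
  have hstep : M * Real.exp (-γ * t) * ‖ψ‖ ≤ M * Real.exp (-γ * t) * (2 * ‖ψ'‖) := by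
    apply mul_le_mul_of_nonneg_left hψle
    exact mul_nonneg hM.le (Real.exp_pos _).le
  linarith
end

section
/- Let n ∈ ℕ, r > 0, L_f > 0, and let f : C_r → ℝⁿ be Fréchet differentiable and L_f-Lipschitz with f(0) = 0 (0 the zero function in C_r). Let a ≤ b with b - a ≥ 2r, and let x : [a, b] → ℝⁿ be continuous such that the derivative x'(u) exists and equals f(x_u) for every u ∈ [a + r, b]. Then for every t ∈ [a + 2r, b], the second derivative x''(t) exists and satisfies ‖x''(t)‖₂ ≤ L_f² · sup_{s ∈ [t - 2r, t]} ‖x(s)‖₂. -/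
open Set

set_option maxHeartbeats 2000000

/-- Second-derivative bound along solutions of a Lipschitz, differentiable delay
differential equation: `‖x''(t)‖ ≤ L_f² · sup_{s ∈ [t-2r, t]} ‖x(s)‖`. -/
theorem second_derivative_bound_delay
    {n : ℕ} {r Lf : ℝ} (hr : 0 < r) (hLf : 0 < Lf)
    (f : C(Icc (-r) (0:ℝ), EuclideanSpace ℝ (Fin n)) → EuclideanSpace ℝ (Fin n))
    (hfdiff : Differentiable ℝ f)
    (hflip : LipschitzWith (Real.toNNReal Lf) f) (hf0 : f 0 = 0)
    {a b : ℝ} (hab : a ≤ b) (hlen : 2 * r ≤ b - a)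
    (x : ℝ → EuclideanSpace ℝ (Fin n))
    (hxc : ContinuousOn x (Icc a b))
    (hsol : ∀ u : ℝ, a + r ≤ u → u ≤ b →
      ∀ xu : C(Icc (-r) (0:ℝ), EuclideanSpace ℝ (Fin n)),
        (∀ s : Icc (-r) (0:ℝ), xu s = x (u + s.1)) →
        HasDerivWithinAt x (f xu) (Icc a b) u) :
    ∀ t : ℝ, a + 2 * r ≤ t → t ≤ b →
      ∃ v : EuclideanSpace ℝ (Fin n),
        HasDerivWithinAt (fun u => derivWithin x (Icc a b) u) v (Icc a b) t ∧
        ‖v‖ ≤ Lf ^ 2 * ⨆ s : Icc (t - 2 * r) t, ‖x s.1‖ := by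
  intro t ht1 ht2
  have hab' : a < b := by linarith
  -- Extend `x` continuously to all of `ℝ` by clamping to `[a, b]`.
  set X : ℝ → EuclideanSpace ℝ (Fin n) := fun u => x (projIcc a b hab u) with hXdef
  have hXc : Continuous X :=
    hxc.comp_continuous (continuous_subtype_val.comp continuous_projIcc)
      (fun u => (projIcc a b hab u).2)
  have hXeq : ∀ u ∈ Icc a b, X u = x u := by
    intro u hu
    simp [hXdef, projIcc_of_mem hab hu]
  -- The history map `u ↦ X_u`.
  set H2 : C(ℝ × Icc (-r) (0:ℝ), EuclideanSpace ℝ (Fin n)) :=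
    ⟨fun p => X (p.1 + p.2.1),
      hXc.comp (continuous_fst.add (continuous_subtype_val.comp continuous_snd))⟩ with hH2
  set hist : ℝ → C(Icc (-r) (0:ℝ), EuclideanSpace ℝ (Fin n)) :=
    fun u => H2.curry u with hhist
  have histc : Continuous hist := H2.curry.continuous
  have hist_apply : ∀ u s, hist u s = X (u + s.1) := fun u s => rfl
  -- The right-hand side function `g u = f (X_u)`.
  set g : ℝ → EuclideanSpace ℝ (Fin n) := fun u => f (hist u) with hgdef
  have hgc : Continuous g := hflip.continuous.comp histc
  have hmemIcc : ∀ u, a + r ≤ u → u ≤ b → ∀ s : Icc (-r) (0:ℝ), u + s.1 ∈ Icc a b := by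
    intro u h1 h2 s
    exact ⟨by linarith [s.2.1], by linarith [s.2.2]⟩
  have hx' : ∀ u, a + r ≤ u → u ≤ b → HasDerivWithinAt x (g u) (Icc a b) u := by
    intro u h1 h2
    exact hsol u h1 h2 (hist u)
      (fun s => (hist_apply u s).trans (hXeq _ (hmemIcc u h1 h2 s)))
  have hX' : ∀ u, a + r ≤ u → u ≤ b → HasDerivWithinAt X (g u) (Icc a b) u := by
    intro u h1 h2
    exact (hx' u h1 h2).congr (fun v hv => hXeq v hv) (hXeq u ⟨by linarith, h2⟩)
  -- The candidate derivative of the history map at `t`.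
  set Gt : C(Icc (-r) (0:ℝ), EuclideanSpace ℝ (Fin n)) :=
    ⟨fun s => g (t + s.1),
      hgc.comp (continuous_const.add continuous_subtype_val)⟩ with hGtdef
  have Gt_apply : ∀ s, Gt s = g (t + s.1) := fun s => rfl
  -- Uniform continuity of `g` on `[a, b]`.
  have hgu : ∀ ε > 0, ∃ δ > 0, ∀ p ∈ Icc a b, ∀ q ∈ Icc a b,
      |p - q| < δ → ‖g p - g q‖ < ε := by
    intro ε hε
    have huc := (isCompact_Icc (a := a) (b := b)).uniformContinuousOn_of_continuous
      hgc.continuousOn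
    rw [Metric.uniformContinuousOn_iff] at huc
    obtain ⟨δ, hδ, hd⟩ := huc ε hε
    refine ⟨δ, hδ, fun p hp q hq h => ?_⟩
    have := hd p hp q hq (by rwa [Real.dist_eq])
    rwa [dist_eq_norm] at this
  -- The key step: differentiability of the history map within `[a, b]` at `t`.
  have claimA : HasDerivWithinAt hist Gt (Icc a b) t := by
    rw [hasDerivWithinAt_iff_isLittleO, Asymptotics.isLittleO_iff]
    intro ε hε
    have hε3 : 0 < ε / 3 := by linarith
    obtain ⟨δ₁, hδ₁, hg1⟩ := hgu (ε / 3) hε3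
    have h0 : (fun ξ => X ξ - X (a + r) - (ξ - (a + r)) • g (a + r))
        =o[nhdsWithin (a + r) (Icc a b)] fun ξ => ξ - (a + r) :=
      hasDerivWithinAt_iff_isLittleO.mp (hX' (a + r) le_rfl (by linarith))
    have h0' := Asymptotics.isLittleO_iff.mp h0 hε3
    rw [Metric.nhdsWithin_basis_ball.eventually_iff] at h0'
    obtain ⟨δ₂, hδ₂, h0''⟩ := h0'
    set δ := min (min δ₁ δ₂) r with hδdef
    have hδ : 0 < δ := lt_min (lt_min hδ₁ hδ₂) hr
    have hδle1 : δ ≤ δ₁ := le_trans (min_le_left _ _) (min_le_left _ _)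
    have hδle2 : δ ≤ δ₂ := le_trans (min_le_left _ _) (min_le_right _ _)
    have hδler : δ ≤ r := min_le_right _ _
    rw [Metric.nhdsWithin_basis_ball.eventually_iff]
    refine ⟨δ, hδ, fun u hu => ?_⟩
    obtain ⟨hub, hu⟩ := hu
    have hut : |u - t| < δ := by
      rw [Metric.mem_ball, Real.dist_eq] at hub; exact hub
    rw [Real.norm_eq_abs]
    have habs : (0:ℝ) ≤ ε * |u - t| := by positivity
    refine (ContinuousMap.norm_le _ habs).mpr fun s => ?_
    simp only [ContinuousMap.sub_apply, ContinuousMap.smul_apply]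
    rw [hist_apply, hist_apply, Gt_apply]
    set h := u - t with hh
    set w := t + s.1 with hw
    have hs1 := s.2.1
    have hs2 := s.2.2
    have hw1 : a + r ≤ w := by rw [hw]; linarith
    have hw2 : w ≤ b := by rw [hw]; linarith
    have hwh_eq : u + s.1 = w + h := by rw [hw, hh]; ring
    have hwhb : w + h ≤ b := by rw [← hwh_eq]; linarith [hu.2]
    have hha : |h| < δ := hut
    have hhr : -r < h ∧ h < r := abs_lt.mp (lt_of_lt_of_le hha hδler)
    rw [hwh_eq]
    -- mean value estimate on subintervals of `[a+r, b]`
    have mvt : ∀ w₂, a + r ≤ w₂ → w₂ ≤ b → |w₂ - w| ≤ |h| →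
        ‖X w₂ - X w - (w₂ - w) • g w‖ ≤ ε / 3 * |h| := by
      intro w₂ hw₂1 hw₂2 hw₂3
      have hsub : uIcc w w₂ ⊆ Icc a b := fun ξ hξ => by
        rw [mem_uIcc] at hξ
        rcases hξ with ⟨h3, h4⟩ | ⟨h3, h4⟩ <;> exact ⟨by linarith, by linarith⟩
      have hd : ∀ ξ ∈ uIcc w w₂,
          HasDerivWithinAt (fun ζ => X ζ - ζ • g w) (g ξ - g w) (uIcc w w₂) ξ := by
        intro ξ hξ
        rw [mem_uIcc] at hξ
        have h1 : a + r ≤ ξ := by rcases hξ with ⟨h', _⟩ | ⟨h', _⟩ <;> linarith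
        have h2 : ξ ≤ b := by rcases hξ with ⟨_, h'⟩ | ⟨_, h'⟩ <;> linarith
        have hX'' := (hX' ξ h1 h2).mono hsub
        have hlin : HasDerivWithinAt (fun ζ : ℝ => ζ • g w) (g w) (uIcc w w₂) ξ := by
          simpa using ((hasDerivAt_id ξ).smul_const (g w)).hasDerivWithinAt
            (s := uIcc w w₂)
        exact hX''.sub hlin
      have hbound : ∀ ξ ∈ uIcc w w₂, ‖g ξ - g w‖ ≤ ε / 3 := by
        intro ξ hξ
        rw [mem_uIcc] at hξ
        rcases hξ with ⟨h3, h4⟩ | ⟨h3, h4⟩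
        · have hd' : |ξ - w| ≤ |w₂ - w| := by
            rw [abs_of_nonneg (by linarith : (0:ℝ) ≤ ξ - w)]
            exact le_trans (by linarith [le_abs_self (w₂ - w)]) le_rfl
          exact le_of_lt (hg1 ξ ⟨by linarith, by linarith⟩ w ⟨by linarith, hw2⟩
            (lt_of_le_of_lt (le_trans hd' hw₂3) (lt_of_lt_of_le hha hδle1)))
        · have hd' : |ξ - w| ≤ |w₂ - w| := by
            rw [abs_of_nonpos (by linarith : ξ - w ≤ 0)]
            linarith [neg_abs_le (w₂ - w)]
          exact le_of_lt (hg1 ξ ⟨by linarith, by linarith⟩ w ⟨by linarith, hw2⟩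
            (lt_of_le_of_lt (le_trans hd' hw₂3) (lt_of_lt_of_le hha hδle1)))
      have hm := Convex.norm_image_sub_le_of_norm_hasDerivWithin_le hd hbound
        (convex_uIcc w w₂) left_mem_uIcc right_mem_uIcc
      have heq : X w₂ - w₂ • g w - (X w - w • g w) = X w₂ - X w - (w₂ - w) • g w := by
        rw [sub_smul]; abel
      rw [heq] at hm
      calc ‖X w₂ - X w - (w₂ - w) • g w‖ ≤ ε / 3 * ‖w₂ - w‖ := hm
        _ ≤ ε / 3 * |h| := by
            rw [Real.norm_eq_abs]
            exact mul_le_mul_of_nonneg_left hw₂3 (le_of_lt hε3)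
    rcases le_or_gt (a + r) (w + h) with hcase | hcase
    · have hm := mvt (w + h) hcase hwhb (by simp)
      have : w + h - w = h := by ring
      rw [this] at hm
      nlinarith [abs_nonneg h]
    · -- `w + h` dips below `a + r`: use differentiability at the endpoint `a + r`.
      have hh0 : h < 0 := by linarith
      have hwa : w - (a + r) < -h := by linarith
      have hd1 : |w + h - (a + r)| ≤ |h| := by
        rw [abs_le, abs_of_neg hh0]; constructor <;> linarith
      have hd2 : |a + r - w| ≤ |h| := by
        rw [abs_le, abs_of_neg hh0]; constructor <;> linarith
      have hmem : w + h ∈ Icc a b := ⟨by linarith [hhr.1], hwhb⟩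
      have hA1 : ‖X (w + h) - X (a + r) - (w + h - (a + r)) • g (a + r)‖ ≤ ε / 3 * |h| := by
        have hball : w + h ∈ Metric.ball (a + r) δ₂ := by
          rw [Metric.mem_ball, Real.dist_eq]
          exact lt_of_le_of_lt hd1 (lt_of_lt_of_le hha hδle2)
        have := h0'' ⟨hball, hmem⟩
        rw [Real.norm_eq_abs] at this
        calc ‖X (w + h) - X (a + r) - (w + h - (a + r)) • g (a + r)‖
            ≤ ε / 3 * |w + h - (a + r)| := this
          _ ≤ ε / 3 * |h| := mul_le_mul_of_nonneg_left hd1 (le_of_lt hε3)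
      have hA3 : ‖X (a + r) - X w - (a + r - w) • g w‖ ≤ ε / 3 * |h| :=
        mvt (a + r) le_rfl (by linarith) hd2
      have hA4 : ‖(w + h - (a + r)) • (g (a + r) - g w)‖ ≤ ε / 3 * |h| := by
        rw [norm_smul, Real.norm_eq_abs]
        have hgd : ‖g (a + r) - g w‖ ≤ ε / 3 := by
          refine le_of_lt (hg1 (a + r) ⟨by linarith, by linarith⟩ w ⟨by linarith, hw2⟩ ?_)
          have : |a + r - w| ≤ |h| := hd2
          exact lt_of_le_of_lt this (lt_of_lt_of_le hha hδle1)
        calc |w + h - (a + r)| * ‖g (a + r) - g w‖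
            ≤ |h| * (ε / 3) := mul_le_mul hd1 hgd (norm_nonneg _) (abs_nonneg _)
          _ = ε / 3 * |h| := by ring
      have hsplit : X (w + h) - X w - h • g w
          = (X (w + h) - X (a + r) - (w + h - (a + r)) • g (a + r))
            + (X (a + r) - X w - (a + r - w) • g w)
            + (w + h - (a + r)) • (g (a + r) - g w) := by
        have : (h : ℝ) = (w + h - (a + r)) + (a + r - w) := by ring
        rw [this]
        module
      rw [hsplit]
      calc ‖_ + _ + _‖ ≤ ‖X (w + h) - X (a + r) - (w + h - (a + r)) • g (a + r)‖
            + ‖X (a + r) - X w - (a + r - w) • g w‖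
            + ‖(w + h - (a + r)) • (g (a + r) - g w)‖ := norm_add₃_le
        _ ≤ ε * |h| := by linarith
  -- Chain rule: `g` is differentiable at `t` within `[a, b]`.
  have hg' : HasDerivWithinAt g (fderiv ℝ f (hist t) Gt) (Icc a b) t :=
    (hfdiff (hist t)).hasFDerivAt.comp_hasDerivWithinAt t claimA
  refine ⟨fderiv ℝ f (hist t) Gt, ?_, ?_⟩
  · refine hg'.congr_of_eventuallyEq ?_ ?_
    · have hb : Metric.ball t r ∈ nhdsWithin t (Icc a b) :=
        nhdsWithin_le_nhds (Metric.ball_mem_nhds t hr)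
      filter_upwards [hb, self_mem_nhdsWithin] with u hu1 hu2
      have h1 : a + r ≤ u := by
        have := abs_lt.mp (by rwa [Metric.mem_ball, Real.dist_eq] at hu1)
        linarith [this.1]
      exact (hx' u h1 hu2.2).derivWithin ((uniqueDiffOn_Icc hab') u hu2)
    · exact (hx' t (by linarith) ht2).derivWithin
        ((uniqueDiffOn_Icc hab') t ⟨by linarith, ht2⟩)
  · have hne : Nonempty (Icc (t - 2 * r) t) := ⟨⟨t, ⟨by linarith, le_rfl⟩⟩⟩
    have hincl : Icc (t - 2 * r) t ⊆ Icc a b := Icc_subset_Icc (by linarith) ht2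
    have hbdd : BddAbove (Set.range fun s : Icc (t - 2 * r) t => ‖x s.1‖) := by
      obtain ⟨C, hC⟩ := (isCompact_Icc (a := t - 2 * r) (b := t)).bddAbove_image
        ((hxc.mono hincl).norm)
      refine ⟨C, ?_⟩
      rintro y ⟨s, rfl⟩
      exact hC ⟨s.1, s.2, rfl⟩
    set M := ⨆ s : Icc (t - 2 * r) t, ‖x s.1‖ with hM
    have hle : ∀ ξ, t - 2 * r ≤ ξ → ξ ≤ t → ‖x ξ‖ ≤ M :=
      fun ξ h1 h2 => le_ciSup hbdd ⟨ξ, h1, h2⟩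
    have hM0 : 0 ≤ M := le_trans (norm_nonneg _) (hle t (by linarith) le_rfl)
    have hLfM : 0 ≤ Lf * M := by positivity
    have hhistle : ∀ u, t - r ≤ u → u ≤ t → ‖hist u‖ ≤ M := by
      intro u h1 h2
      refine (ContinuousMap.norm_le _ hM0).mpr fun s => ?_
      rw [hist_apply, hXeq _ ⟨by linarith [s.2.1], by linarith [s.2.2]⟩]
      exact hle _ (by linarith [s.2.1]) (by linarith [s.2.2])
    have hGt : ‖Gt‖ ≤ Lf * M := by
      refine (ContinuousMap.norm_le _ hLfM).mpr fun s => ?_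
      rw [Gt_apply]
      have hlip := hflip.dist_le_mul (hist (t + s.1)) 0
      rw [dist_eq_norm, dist_eq_norm, sub_zero, hf0, sub_zero] at hlip
      calc ‖g (t + s.1)‖ = ‖f (hist (t + s.1))‖ := rfl
        _ ≤ Lf * ‖hist (t + s.1)‖ := by
            simpa [Real.coe_toNNReal Lf hLf.le] using hlip
        _ ≤ Lf * M := mul_le_mul_of_nonneg_left
            (hhistle _ (by linarith [s.2.1]) (by linarith [s.2.2])) hLf.le
    have hop : ‖fderiv ℝ f (hist t)‖ ≤ Lf := by
      simpa [Real.coe_toNNReal Lf hLf.le] using norm_fderiv_le_of_lipschitz ℝ hflip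
    calc ‖fderiv ℝ f (hist t) Gt‖
        ≤ ‖fderiv ℝ f (hist t)‖ * ‖Gt‖ := ContinuousLinearMap.le_opNorm _ _
      _ ≤ Lf * (Lf * M) := mul_le_mul hop hGt (norm_nonneg _) hLf.le
      _ = Lf ^ 2 * M := by ring
end

section
/- Let n ∈ ℕ, r > 0, L_f > 0, q > 1, let f : C_r → ℝⁿ be Fréchet differentiable and L_f-Lipschitz with f(0) = 0, and let V : ℝⁿ → ℝ be convex and differentiable with c₁·‖y‖₂² ≤ V(y) ≤ c₂·‖y‖₂² for all y ∈ ℝⁿ, where c₁, c₂ > 0. Let K_V ∈ ℕ with K_V ≥ 1, τ_V > 0, set r_V = K_V·τ_V and assume r_V ≥ r. Let t₀ ∈ ℝ and let x be continuous on [t₀ - r_V - 2r, t₀] with x'(u) = f(x_u) for all u ∈ [t₀ - r_V - r, t₀]. Set M = 4c₂ - c₁, ρ = sup_{s ∈ [-r_V, 0]} ‖x(t₀+s)‖₂, and let w ≥ 1 satisfy sup_{s ∈ [-r_V - 2r, 0]} ‖x(t₀+s)‖₂ ≤ w·ρ. Assume the discretized Razumikhin condition V(x(t₀ - k·τ_V))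 ≤ q·V(x(t₀)) for all k ∈ {0, 1, …, K_V}, and additionally 8c₁ > M·L_f²·w·τ_V². Then for every s ∈ [-r_V, 0]: V(x(t₀+s)) ≤ (q / (1 - M·L_f²·w·τ_V²/(8c₁)))·V(x(t₀)). -/
open Set intervalIntegral MeasureTheory

/-- A differentiable convex function lies above its tangent lines. -/
lemma aux_convex_tangent {E : Type*} [NormedAddCommGroup E] [NormedSpace ℝ E]
    {V : E → ℝ} (hVconv : ConvexOn ℝ univ V) (hVdiff : Differentiable ℝ V)
    (z d : E) : V z + fderiv ℝ V z d ≤ V (z + d) := by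
  set g : ℝ → ℝ := fun t => V (z + t • d) with hg
  have hgc : ConvexOn ℝ univ g := by
    have := hVconv.comp_affineMap (AffineMap.lineMap z (z + d))
    simp only [preimage_univ] at this
    have heq : g = V ∘ ⇑(AffineMap.lineMap z (z + d)) := by
      funext t
      simp [g, AffineMap.lineMap_apply, add_comm]
    rw [heq]; exact this
  have hg0 : HasDerivAt g (fderiv ℝ V z d) 0 := by
    have h1 : HasDerivAt (fun t : ℝ => z + t • d) d 0 := by
      simpa using ((hasDerivAt_id (0:ℝ)).smul_const d).const_add z
    have := (hVdiff (z + (0:ℝ) • d)).hasFDerivAt.comp_hasDerivAt 0 h1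
    simp only [zero_smul, add_zero] at this
    exact this
  have hs := hgc.le_slope_of_hasDerivAt (mem_univ (0:ℝ)) (mem_univ (1:ℝ)) one_pos hg0
  have : slope g 0 1 = V (z + d) - V z := by
    simp [slope_def_field, g]
  rw [this] at hs
  linarith

/-- Gradient bound for a convex function sandwiched between quadratics. -/
lemma aux_grad_bound {E : Type*} [NormedAddCommGroup E] [NormedSpace ℝ E]
    {V : E → ℝ} {c₁ c₂ : ℝ} (hc₁ : 0 < c₁) (hcc : c₁ ≤ c₂)
    (hVconv : ConvexOn ℝ univ V) (hVdiff : Differentiable ℝ V)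
    (hsw : ∀ y : E, c₁ * ‖y‖ ^ 2 ≤ V y ∧ V y ≤ c₂ * ‖y‖ ^ 2) (z : E) :
    ‖fderiv ℝ V z‖ ≤ (4 * c₂ - c₁) * ‖z‖ := by
  have hM : (0:ℝ) ≤ 4 * c₂ - c₁ := by linarith
  have hV0 : V 0 = 0 := by
    have h := hsw 0
    simp only [norm_zero] at h
    nlinarith [h.1, h.2]
  have key : ∀ d : E, fderiv ℝ V z d ≤ (4 * c₂ - c₁) * ‖z‖ * ‖d‖ := by
    intro d
    rcases eq_or_ne d 0 with rfl | hd
    · simp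
    have hdpos : (0:ℝ) < ‖d‖ := norm_pos_iff.2 hd
    rcases eq_or_ne z 0 with rfl | hz
    · -- show fderiv V 0 d ≤ 0
      have hb : ∀ t : ℝ, 0 < t → fderiv ℝ V 0 d ≤ c₂ * t * ‖d‖ ^ 2 := by
        intro t ht
        have h1 := aux_convex_tangent hVconv hVdiff 0 (t • d)
        have h2 : V (0 + t • d) ≤ c₂ * (t * ‖d‖) ^ 2 := by
          have := (hsw (0 + t • d)).2
          have hn : ‖(0:E) + t • d‖ = t * ‖d‖ := by
            rw [zero_add, norm_smul, Real.norm_eq_abs, abs_of_pos ht]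
          rwa [hn] at this
        have h3 : fderiv ℝ V 0 (t • d) = t * fderiv ℝ V 0 d := by
          rw [_root_.map_smul]; simp
        rw [hV0, h3] at h1
        have : t * fderiv ℝ V 0 d ≤ c₂ * (t * ‖d‖) ^ 2 := by linarith
        have h4 : fderiv ℝ V 0 d ≤ c₂ * (t * ‖d‖ ^ 2) := by
          rw [← mul_le_mul_iff_right₀ ht]
          nlinarith
        nlinarith
      have hle : fderiv ℝ V 0 d ≤ 0 := by
        have hlim : Filter.Tendsto (fun t : ℝ => c₂ * t * ‖d‖ ^ 2)
            (nhdsWithin 0 (Ioi 0)) (nhds 0) := by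
          have hcont : Continuous fun t : ℝ => c₂ * t * ‖d‖ ^ 2 := by continuity
          have h := tendsto_nhdsWithin_of_tendsto_nhds (s := Ioi (0:ℝ)) (hcont.tendsto 0)
          simpa using h
        exact ge_of_tendsto hlim
          (by filter_upwards [self_mem_nhdsWithin] with t ht using hb t ht)
      simp only [norm_zero]
      nlinarith
    · have hzpos : (0:ℝ) < ‖z‖ := norm_pos_iff.2 hz
      set t : ℝ := ‖z‖ / ‖d‖ with hts
      have ht : 0 < t := by positivity
      have h1 := aux_convex_tangent hVconv hVdiff z (t • d)
      have hn : ‖z + t • d‖ ≤ 2 * ‖z‖ := by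
        calc ‖z + t • d‖ ≤ ‖z‖ + ‖t • d‖ := norm_add_le _ _
        _ = ‖z‖ + t * ‖d‖ := by rw [norm_smul, Real.norm_eq_abs, abs_of_pos ht]
        _ = 2 * ‖z‖ := by rw [hts, div_mul_cancel₀ _ hdpos.ne']; ring
      have h2 : V (z + t • d) ≤ c₂ * (2 * ‖z‖) ^ 2 := by
        have hs2 := (hsw (z + t • d)).2
        nlinarith [hs2, mul_self_le_mul_self (norm_nonneg (z + t • d)) hn,
          hc₁.trans_le hcc, sq_abs (‖z + t • d‖)]
      have h3 : fderiv ℝ V z (t • d) = t * fderiv ℝ V z d := by rw [_root_.map_smul]; simp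
      have h4 : c₁ * ‖z‖ ^ 2 ≤ V z := (hsw z).1
      rw [h3] at h1
      have h5 : t * fderiv ℝ V z d ≤ (4 * c₂ - c₁) * ‖z‖ ^ 2 := by nlinarith
      -- multiply through
      have h6 : ‖z‖ * fderiv ℝ V z d ≤ (4 * c₂ - c₁) * ‖z‖ ^ 2 * ‖d‖ := by
        have := mul_le_mul_of_nonneg_right h5 hdpos.le
        have ht' : t * ‖d‖ = ‖z‖ := by rw [hts, div_mul_cancel₀ _ hdpos.ne']
        calc ‖z‖ * fderiv ℝ V z d = t * fderiv ℝ V z d * ‖d‖ := by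
              rw [mul_right_comm, ht']
        _ ≤ (4 * c₂ - c₁) * ‖z‖ ^ 2 * ‖d‖ := this
      have := (mul_le_mul_iff_right₀ hzpos).1 (by nlinarith : ‖z‖ * fderiv ℝ V z d ≤ ‖z‖ * ((4 * c₂ - c₁) * ‖z‖ * ‖d‖))
      exact this
  apply ContinuousLinearMap.opNorm_le_bound _ (by positivity)
  intro d
  rw [Real.norm_eq_abs, abs_le]
  constructor
  · have := key (-d)
    rw [map_neg, norm_neg] at this
    linarith
  · exact key d

/-- Deviation of a curve with Lipschitz-controlled derivative from its chord. -/
lemma aux_chord_deviation {E : Type*} [NormedAddCommGroup E] [NormedSpace ℝ E] [CompleteSpace E]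
    {g G : ℝ → E} {a b t L : ℝ} (hab : a < b) (hta : a ≤ t) (htb : t ≤ b) (hL0 : 0 ≤ L)
    (hFTC : ∀ u v : ℝ, a ≤ u → u ≤ v → v ≤ b → g v - g u = ∫ z in u..v, G z)
    (hGc : ContinuousOn G (Icc a b))
    (hL : ∀ u ∈ Icc a b, ‖G u - G t‖ ≤ L * |u - t|) :
    ‖g t - (((b - t) / (b - a)) • g a + ((t - a) / (b - a)) • g b)‖
      ≤ L * (b - a) ^ 2 / 8 := by
  have hτ : (0:ℝ) < b - a := by linarith
  have hτ0 : b - a ≠ 0 := ne_of_gt hτ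
  set θ : ℝ := (b - t) / (b - a) with hθdef
  set θ' : ℝ := (t - a) / (b - a) with hθ'def
  have hθ0 : 0 ≤ θ := by apply div_nonneg <;> linarith
  have hθ'0 : 0 ≤ θ' := by apply div_nonneg <;> linarith
  have hθsum : θ + θ' = 1 := by rw [hθdef, hθ'def]; field_simp; ring
  -- integrability facts
  have hGi1 : IntervalIntegrable G volume a t :=
    ((hGc.mono (Icc_subset_Icc le_rfl htb)).mono (by rw [uIcc_of_le hta])).intervalIntegrable
  have hGi2 : IntervalIntegrable G volume t b :=
    ((hGc.mono (Icc_subset_Icc hta le_rfl)).mono (by rw [uIcc_of_le htb])).intervalIntegrable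
  have hGc1 : IntervalIntegrable (fun z => G z - G t) volume a t :=
    hGi1.sub intervalIntegrable_const
  have hGc2 : IntervalIntegrable (fun z => G z - G t) volume t b :=
    hGi2.sub intervalIntegrable_const
  have I1 : g t - g a = (∫ z in a..t, (G z - G t)) + (t - a) • G t := by
    rw [hFTC a t le_rfl hta htb]
    rw [intervalIntegral.integral_sub hGi1 intervalIntegrable_const,
      intervalIntegral.integral_const]
    abel
  have I2 : g b - g t = (∫ z in t..b, (G z - G t)) + (b - t) • G t := by
    rw [hFTC t b hta htb le_rfl]
    rw [intervalIntegral.integral_sub hGi2 intervalIntegrable_const,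
      intervalIntegral.integral_const]
    abel
  have key : g t - (θ • g a + θ' • g b)
      = θ • (∫ z in a..t, (G z - G t)) - θ' • (∫ z in t..b, (G z - G t))
        + (θ * (t - a) - θ' * (b - t)) • G t := by
    calc g t - (θ • g a + θ' • g b)
        = (θ + θ') • g t - (θ • g a + θ' • g b) := by rw [hθsum, one_smul]
      _ = θ • (g t - g a) - θ' • (g b - g t) := by
          rw [add_smul, smul_sub, smul_sub]; abel
      _ = θ • ((∫ z in a..t, (G z - G t)) + (t - a) • G t)
            - θ' • ((∫ z in t..b, (G z - G t)) + (b - t) • G t) := by rw [I1, I2]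
      _ = θ • (∫ z in a..t, (G z - G t)) - θ' • (∫ z in t..b, (G z - G t))
            + (θ * (t - a) - θ' * (b - t)) • G t := by
          module
  have hcoef : θ * (t - a) - θ' * (b - t) = 0 := by
    rw [hθdef, hθ'def]; field_simp; ring
  rw [key, hcoef, zero_smul, add_zero]
  -- bound each integral
  have hIb1 : ‖∫ z in a..t, (G z - G t)‖ ≤ L * (t - a) ^ 2 / 2 := by
    have hbound : ∀ᵐ z ∂(volume.restrict (Set.uIoc a t)), ‖G z - G t‖ ≤ L * (t - z) := by
      filter_upwards [ae_restrict_mem measurableSet_uIoc] with z hz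
      rw [uIoc_of_le hta] at hz
      have hz' : z ∈ Icc a b := ⟨hz.1.le, hz.2.trans htb⟩
      have := hL z hz'
      rwa [abs_of_nonpos (by linarith [hz.2] : z - t ≤ 0), neg_sub] at this
    have hbi : IntervalIntegrable (fun z => L * (t - z)) volume a t :=
      ((continuous_const.mul (continuous_const.sub continuous_id)).continuousOn).intervalIntegrable
    have h := intervalIntegral.norm_integral_le_abs_of_norm_le hbound hbi
    have hcalc : (∫ z in a..t, L * (t - z)) = L * (t - a) ^ 2 / 2 := by
      rw [intervalIntegral.integral_const_mul]
      rw [intervalIntegral.integral_sub intervalIntegrable_const intervalIntegrable_id,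
        intervalIntegral.integral_const, integral_id]
      simp only [smul_eq_mul]
      ring
    rw [hcalc] at h
    calc ‖∫ z in a..t, (G z - G t)‖ ≤ |L * (t - a) ^ 2 / 2| := h
      _ = L * (t - a) ^ 2 / 2 := abs_of_nonneg (by positivity)
  have hIb2 : ‖∫ z in t..b, (G z - G t)‖ ≤ L * (b - t) ^ 2 / 2 := by
    have hbound : ∀ᵐ z ∂(volume.restrict (Set.uIoc t b)), ‖G z - G t‖ ≤ L * (z - t) := by
      filter_upwards [ae_restrict_mem measurableSet_uIoc] with z hz
      rw [uIoc_of_le htb] at hz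
      have hz' : z ∈ Icc a b := ⟨hta.trans hz.1.le, hz.2⟩
      have := hL z hz'
      rwa [abs_of_nonneg (by linarith [hz.1] : (0:ℝ) ≤ z - t)] at this
    have hbi : IntervalIntegrable (fun z => L * (z - t)) volume t b :=
      ((continuous_const.mul (continuous_id.sub continuous_const)).continuousOn).intervalIntegrable
    have h := intervalIntegral.norm_integral_le_abs_of_norm_le hbound hbi
    have hcalc : (∫ z in t..b, L * (z - t)) = L * (b - t) ^ 2 / 2 := by
      rw [intervalIntegral.integral_const_mul]
      rw [intervalIntegral.integral_sub intervalIntegrable_id intervalIntegrable_const,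
        integral_id, intervalIntegral.integral_const]
      simp only [smul_eq_mul]
      ring
    rw [hcalc] at h
    calc ‖∫ z in t..b, (G z - G t)‖ ≤ |L * (b - t) ^ 2 / 2| := h
      _ = L * (b - t) ^ 2 / 2 := abs_of_nonneg (by positivity)
  calc ‖θ • (∫ z in a..t, (G z - G t)) - θ' • (∫ z in t..b, (G z - G t))‖
      ≤ ‖θ • (∫ z in a..t, (G z - G t))‖ + ‖θ' • (∫ z in t..b, (G z - G t))‖ :=
        norm_sub_le _ _
    _ = θ * ‖∫ z in a..t, (G z - G t)‖ + θ' * ‖∫ z in t..b, (G z - G t)‖ := by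
        rw [norm_smul, norm_smul, Real.norm_eq_abs, Real.norm_eq_abs,
          abs_of_nonneg hθ0, abs_of_nonneg hθ'0]
    _ ≤ θ * (L * (t - a) ^ 2 / 2) + θ' * (L * (b - t) ^ 2 / 2) := by
        gcongr
    _ = L * (t - a) * (b - t) / 2 := by
        rw [hθdef, hθ'def]; field_simp; ring
    _ ≤ L * (b - a) ^ 2 / 8 := by
        nlinarith [sq_nonneg ((t - a) - (b - t)), mul_nonneg hL0 (sq_nonneg ((t-a)-(b-t)))]
open Set
set_option maxHeartbeats 1000000 in
/-- Quantitative form of Proposition 2: the discretized Razumikhin condition on a grid of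
spacing `τ_V` implies the continuous Razumikhin condition on the whole interval
`[-r_V, 0]` with inflated factor `q / (1 - M·L_f²·w·τ_V²/(8c₁))`, provided
`8c₁ > M·L_f²·w·τ_V²`. -/
theorem discretized_razumikhin_multiplicative
    {n : ℕ} {r Lf q c₁ c₂ τV w : ℝ} {KV : ℕ}
    (hr : 0 < r) (hLf : 0 < Lf) (hq : 1 < q) (hc₁ : 0 < c₁) (hc₂ : 0 < c₂)
    (hKV : 1 ≤ KV) (hτV : 0 < τV) (hrV : r ≤ KV * τV)
    (f : C(Icc (-r) (0:ℝ), EuclideanSpace ℝ (Fin n)) → EuclideanSpace ℝ (Fin n))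
    (hfdiff : Differentiable ℝ f)
    (hflip : LipschitzWith (Real.toNNReal Lf) f) (hf0 : f 0 = 0)
    (V : EuclideanSpace ℝ (Fin n) → ℝ)
    (hVconv : ConvexOn ℝ univ V) (hVdiff : Differentiable ℝ V)
    (hsandwich : ∀ y : EuclideanSpace ℝ (Fin n),
      c₁ * ‖y‖ ^ 2 ≤ V y ∧ V y ≤ c₂ * ‖y‖ ^ 2)
    (t₀ : ℝ) (x : ℝ → EuclideanSpace ℝ (Fin n))
    (hxc : ContinuousOn x (Icc (t₀ - KV * τV - 2 * r) t₀))
    (hsol : ∀ u : ℝ, t₀ - KV * τV - r ≤ u → u ≤ t₀ →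
      ∀ xu : C(Icc (-r) (0:ℝ), EuclideanSpace ℝ (Fin n)),
        (∀ s : Icc (-r) (0:ℝ), xu s = x (u + s.1)) →
        HasDerivWithinAt x (f xu) (Icc (t₀ - KV * τV - 2 * r) t₀) u)
    (hw : 1 ≤ w)
    (hwρ : (⨆ s : Icc (-(KV * τV) - 2 * r) (0:ℝ), ‖x (t₀ + s.1)‖) ≤
      w * ⨆ s : Icc (-(KV * τV)) (0:ℝ), ‖x (t₀ + s.1)‖)
    (hdisc : ∀ k : ℕ, k ≤ KV → V (x (t₀ - k * τV)) ≤ q * V (x t₀))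
    (hsmall : (4 * c₂ - c₁) * Lf ^ 2 * w * τV ^ 2 < 8 * c₁) :
    ∀ s ∈ Icc (-(KV * τV)) (0:ℝ),
      V (x (t₀ + s)) ≤
        (q / (1 - (4 * c₂ - c₁) * Lf ^ 2 * w * τV ^ 2 / (8 * c₁))) * V (x t₀) := by
  rcases Nat.eq_zero_or_pos n with hn | hn
  · -- trivial case `n = 0`
    subst hn
    have hzero : ∀ y : EuclideanSpace ℝ (Fin 0), y = 0 := fun y => by
      ext i; exact i.elim0
    have hV0 : V 0 = 0 := by
      have h := hsandwich 0
      simp only [norm_zero] at h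
      nlinarith [h.1, h.2]
    intro s _
    rw [hzero (x (t₀ + s)), hzero (x t₀), hV0, mul_zero]
  -- main case `1 ≤ n`
  have hcc : c₁ ≤ c₂ := by
    have h := hsandwich (EuclideanSpace.single (⟨0, hn⟩ : Fin n) (1:ℝ))
    rw [EuclideanSpace.norm_single] at h
    simp only [norm_one, one_pow, mul_one] at h
    linarith [h.1, h.2]
  have hM : (0:ℝ) ≤ 4 * c₂ - c₁ := by linarith
  have hKV' : (1:ℝ) ≤ (KV:ℝ) := by exact_mod_cast hKV
  have hrVpos : (0:ℝ) < (KV:ℝ) * τV := by positivity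
  -- the clamped extension of `x`
  set cl : ℝ → ℝ := fun u => max (t₀ - KV * τV - 2 * r) (min u t₀) with hcldef
  have hcl_cont : Continuous cl := continuous_const.max (continuous_id.min continuous_const)
  have hcl_mem : ∀ u, cl u ∈ Icc (t₀ - KV * τV - 2 * r) t₀ := fun u =>
    ⟨le_max_left _ _, max_le (by nlinarith) (min_le_right _ _)⟩
  have hcl_eq : ∀ u ∈ Icc (t₀ - KV * τV - 2 * r) t₀, cl u = u := fun u hu => by
    rw [hcldef]; dsimp only; rw [min_eq_left hu.2, max_eq_right hu.1]
  set xe : ℝ → EuclideanSpace ℝ (Fin n) := fun u => x (cl u) with hxedef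
  have hxe_cont : Continuous xe := hxc.comp_continuous hcl_cont hcl_mem
  have hxe_eq : ∀ u ∈ Icc (t₀ - KV * τV - 2 * r) t₀, xe u = x u := fun u hu => by
    rw [hxedef]; dsimp only; rw [hcl_eq u hu]
  -- histories
  set hist : ℝ → C(Icc (-r) (0:ℝ), EuclideanSpace ℝ (Fin n)) :=
    fun u => ⟨fun σ => xe (u + σ.1),
      hxe_cont.comp (continuous_const.add continuous_subtype_val)⟩ with hhistdef
  have hmemJ : ∀ u ∈ Icc (t₀ - KV * τV - r) t₀, ∀ σ : Icc (-r) (0:ℝ),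
      u + σ.1 ∈ Icc (t₀ - KV * τV - 2 * r) t₀ := by
    intro u hu σ
    have h1 := σ.2.1
    have h2 := σ.2.2
    exact ⟨by linarith [hu.1], by linarith [hu.2]⟩
  have hhist_eq : ∀ u ∈ Icc (t₀ - KV * τV - r) t₀, ∀ σ : Icc (-r) (0:ℝ),
      hist u σ = x (u + σ.1) := by
    intro u hu σ
    exact hxe_eq _ (hmemJ u hu σ)
  set F : ℝ → EuclideanSpace ℝ (Fin n) := fun u => f (hist u) with hFdef
  -- the sups
  haveI ne1 : Nonempty (Icc (-(KV * τV : ℝ)) (0:ℝ)) :=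
    ⟨⟨0, mem_Icc.2 ⟨by linarith, le_rfl⟩⟩⟩
  haveI ne2 : Nonempty (Icc (-(KV * τV : ℝ) - 2 * r) (0:ℝ)) :=
    ⟨⟨0, mem_Icc.2 ⟨by linarith, le_rfl⟩⟩⟩
  set ρ : ℝ := ⨆ s : Icc (-(KV * τV : ℝ)) (0:ℝ), ‖x (t₀ + s.1)‖ with hρdef
  set S : ℝ := ⨆ s : Icc (-(KV * τV : ℝ)) (0:ℝ), V (x (t₀ + s.1)) with hSdef
  have hmap2 : ∀ u ∈ Icc (-(KV * τV : ℝ) - 2 * r) (0:ℝ),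
      t₀ + u ∈ Icc (t₀ - KV * τV - 2 * r) t₀ := fun u hu =>
    ⟨by linarith [hu.1], by linarith [hu.2]⟩
  have hcont2 : ContinuousOn (fun u : ℝ => x (t₀ + u)) (Icc (-(KV * τV : ℝ) - 2 * r) 0) :=
    hxc.comp ((continuous_const.add continuous_id).continuousOn) hmap2
  obtain ⟨C₂, hC₂⟩ := isCompact_Icc.exists_bound_of_continuousOn hcont2
  have hbdd2 : BddAbove (range fun s : Icc (-(KV * τV : ℝ) - 2 * r) (0:ℝ) => ‖x (t₀ + s.1)‖) :=
    ⟨C₂, by rintro _ ⟨i, rfl⟩; simpa using hC₂ i.1 i.2⟩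
  have hsub12 : Icc (-(KV * τV : ℝ)) (0:ℝ) ⊆ Icc (-(KV * τV : ℝ) - 2 * r) (0:ℝ) :=
    Icc_subset_Icc (by linarith) le_rfl
  have hbdd1 : BddAbove (range fun s : Icc (-(KV * τV : ℝ)) (0:ℝ) => ‖x (t₀ + s.1)‖) :=
    ⟨C₂, by rintro _ ⟨i, rfl⟩; simpa using hC₂ i.1 (hsub12 i.2)⟩
  obtain ⟨C₃, hC₃⟩ := isCompact_Icc.exists_bound_of_continuousOn
    (hVdiff.continuous.comp_continuousOn (hcont2.mono hsub12))
  have hbddS : BddAbove (range fun s : Icc (-(KV * τV : ℝ)) (0:ℝ) => V (x (t₀ + s.1))) :=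
    ⟨C₃, by
      rintro _ ⟨i, rfl⟩
      exact (le_abs_self _).trans (by simpa [Real.norm_eq_abs] using hC₃ i.1 i.2)⟩
  have hρ0 : 0 ≤ ρ :=
    (norm_nonneg _).trans (le_ciSup hbdd1 (⟨0, mem_Icc.2 ⟨by linarith, le_rfl⟩⟩ :
      Icc (-(KV * τV : ℝ)) (0:ℝ)))
  have hwρ0 : 0 ≤ w * ρ := mul_nonneg (by linarith) hρ0
  -- uniform bound on the trajectory
  have hnormbd : ∀ u ∈ Icc (t₀ - KV * τV - 2 * r) t₀, ‖x u‖ ≤ w * ρ := by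
    intro u hu
    have hmem : u - t₀ ∈ Icc (-(KV * τV : ℝ) - 2 * r) (0:ℝ) :=
      ⟨by linarith [hu.1], by linarith [hu.2]⟩
    have h1 : ‖x (t₀ + (u - t₀))‖ ≤
        ⨆ s : Icc (-(KV * τV : ℝ) - 2 * r) (0:ℝ), ‖x (t₀ + s.1)‖ :=
      le_ciSup hbdd2 ⟨u - t₀, hmem⟩
    have he : t₀ + (u - t₀) = u := by ring
    rw [he] at h1
    exact h1.trans hwρ
  -- bound on F
  have hhist_norm : ∀ u ∈ Icc (t₀ - KV * τV - r) t₀, ‖hist u‖ ≤ w * ρ := by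
    intro u hu
    rw [ContinuousMap.norm_le _ hwρ0]
    intro σ
    rw [hhist_eq u hu σ]
    exact hnormbd _ (hmemJ u hu σ)
  have hFbd : ∀ u ∈ Icc (t₀ - KV * τV - r) t₀, ‖F u‖ ≤ Lf * (w * ρ) := by
    intro u hu
    have h := hflip.dist_le_mul (hist u) 0
    rw [hf0, dist_zero_right, dist_zero_right, Real.coe_toNNReal _ hLf.le] at h
    calc ‖F u‖ ≤ Lf * ‖hist u‖ := h
      _ ≤ Lf * (w * ρ) := by
          exact mul_le_mul_of_nonneg_left (hhist_norm u hu) hLf.le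
  -- the ODE
  have hderiv : ∀ u ∈ Icc (t₀ - KV * τV - r) t₀,
      HasDerivWithinAt x (F u) (Icc (t₀ - KV * τV - 2 * r) t₀) u := fun u hu =>
    hsol u hu.1 hu.2 (hist u) (fun σ => hhist_eq u hu σ)
  -- Lipschitz bound on x over the middle interval
  have hxlip : ∀ u ∈ Icc (t₀ - KV * τV - r) t₀, ∀ v ∈ Icc (t₀ - KV * τV - r) t₀,
      ‖x u - x v‖ ≤ Lf * (w * ρ) * ‖u - v‖ := by
    intro u hu v hv
    exact Convex.norm_image_sub_le_of_norm_hasDerivWithin_le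
      (fun z hz => (hderiv z hz).mono (Icc_subset_Icc (by linarith) le_rfl))
      (fun z hz => hFbd z hz) (convex_Icc _ _) hv hu
  -- Lipschitz bound on F over the inner interval
  have hFlip : ∀ u ∈ Icc (t₀ - KV * τV) t₀, ∀ v ∈ Icc (t₀ - KV * τV) t₀,
      ‖F u - F v‖ ≤ Lf * (Lf * (w * ρ)) * ‖u - v‖ := by
    intro u hu v hv
    have huJ : u ∈ Icc (t₀ - KV * τV - r) t₀ := ⟨by linarith [hu.1], hu.2⟩
    have hvJ : v ∈ Icc (t₀ - KV * τV - r) t₀ := ⟨by linarith [hv.1], hv.2⟩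
    have hh : dist (hist u) (hist v) ≤ Lf * (w * ρ) * ‖u - v‖ := by
      rw [ContinuousMap.dist_le (by positivity)]
      intro σ
      rw [dist_eq_norm, hhist_eq u huJ σ, hhist_eq v hvJ σ]
      have h1 : u + σ.1 ∈ Icc (t₀ - KV * τV - r) t₀ :=
        ⟨by linarith [hu.1, σ.2.1], by linarith [hu.2, σ.2.2]⟩
      have h2 : v + σ.1 ∈ Icc (t₀ - KV * τV - r) t₀ :=
        ⟨by linarith [hv.1, σ.2.1], by linarith [hv.2, σ.2.2]⟩
      have h3 := hxlip _ h1 _ h2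
      have he : u + σ.1 - (v + σ.1) = u - v := by ring
      rwa [he] at h3
    have h4 := hflip.dist_le_mul (hist u) (hist v)
    rw [Real.coe_toNNReal _ hLf.le] at h4
    calc ‖F u - F v‖ = dist (F u) (F v) := (dist_eq_norm _ _).symm
      _ ≤ Lf * dist (hist u) (hist v) := h4
      _ ≤ Lf * (Lf * (w * ρ) * ‖u - v‖) := mul_le_mul_of_nonneg_left hh hLf.le
      _ = Lf * (Lf * (w * ρ)) * ‖u - v‖ := by ring
  -- continuity of F on the inner interval
  have hFcont : ContinuousOn F (Icc (t₀ - KV * τV) t₀) := by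
    apply LipschitzOnWith.continuousOn (K := Real.toNNReal (Lf * (Lf * (w * ρ))))
    rw [lipschitzOnWith_iff_dist_le_mul]
    intro u hu v hv
    rw [Real.coe_toNNReal _ (by positivity), dist_eq_norm, dist_eq_norm]
    exact hFlip u hu v hv
  -- fundamental theorem of calculus
  have hFTC : ∀ u v : ℝ, t₀ - KV * τV ≤ u → u ≤ v → v ≤ t₀ →
      x v - x u = ∫ z in u..v, F z := by
    intro u v h1 h2 h3
    refine (intervalIntegral.integral_eq_sub_of_hasDeriv_right_of_le h2
      (hxc.mono (Icc_subset_Icc (by linarith) h3)) ?_ ?_).symm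
    · intro z hz
      have hzJ : z ∈ Icc (t₀ - KV * τV - r) t₀ :=
        ⟨by linarith [hz.1.le], by linarith [hz.2.le]⟩
      exact ((hderiv z hzJ).hasDerivAt
        (Icc_mem_nhds (by linarith [hz.1]) (by linarith [hz.2]))).hasDerivWithinAt
    · apply ContinuousOn.intervalIntegrable
      apply hFcont.mono
      rw [uIcc_of_le h2]
      exact Icc_subset_Icc h1 h3
  -- c₁ ρ² ≤ S
  have hρsq : c₁ * ρ ^ 2 ≤ S := by
    have hS0' : 0 ≤ S / c₁ := by
      apply div_nonneg _ hc₁.le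
      refine le_trans ?_ (le_ciSup hbddS (⟨0, mem_Icc.2 ⟨by linarith, le_rfl⟩⟩ :
        Icc (-(KV * τV : ℝ)) (0:ℝ)))
      exact le_trans (by positivity) (hsandwich _).1
    have h1 : ρ ≤ Real.sqrt (S / c₁) := by
      apply ciSup_le
      intro i
      rw [show ‖x (t₀ + i.1)‖ = √(‖x (t₀ + i.1)‖ ^ 2) from (Real.sqrt_sq (norm_nonneg _)).symm]
      apply Real.sqrt_le_sqrt
      rw [le_div_iff₀ hc₁]
      calc ‖x (t₀ + i.1)‖ ^ 2 * c₁ = c₁ * ‖x (t₀ + i.1)‖ ^ 2 := by ring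
        _ ≤ V (x (t₀ + i.1)) := (hsandwich _).1
        _ ≤ S := le_ciSup hbddS i
    have h2 : ρ ^ 2 ≤ S / c₁ := by
      calc ρ ^ 2 ≤ Real.sqrt (S / c₁) ^ 2 := pow_le_pow_left₀ hρ0 h1 2
      _ = S / c₁ := Real.sq_sqrt hS0'
    calc c₁ * ρ ^ 2 ≤ c₁ * (S / c₁) := mul_le_mul_of_nonneg_left h2 hc₁.le
      _ = S := by field_simp
  -- per-point estimate
  have hpt : ∀ s ∈ Icc (-(KV * τV : ℝ)) (0:ℝ), V (x (t₀ + s)) ≤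
      q * V (x t₀) + (4 * c₂ - c₁) * Lf ^ 2 * w * τV ^ 2 / (8 * c₁) * S := by
    intro s hs
    obtain ⟨hs1, hs2⟩ := hs
    obtain ⟨k, hkdef⟩ : ∃ k : ℕ, k = min (KV - 1) ⌊(-s) / τV⌋₊ := ⟨_, rfl⟩
    have hk1 : k + 1 ≤ KV := by
      rw [hkdef]
      have := Nat.min_le_left (KV - 1) ⌊(-s) / τV⌋₊
      omega
    have hk1' : ((k:ℝ) + 1) ≤ (KV:ℝ) := by exact_mod_cast hk1
    have hfl : ((k:ℝ)) ≤ (-s) / τV := by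
      calc ((k:ℝ)) ≤ (⌊(-s) / τV⌋₊ : ℝ) := by
            rw [hkdef]; exact_mod_cast Nat.min_le_right _ _
        _ ≤ (-s) / τV := Nat.floor_le (div_nonneg (by linarith) hτV.le)
    have hTa : (k:ℝ) * τV ≤ -s := by
      have := mul_le_mul_of_nonneg_right hfl hτV.le
      rwa [div_mul_cancel₀ _ (ne_of_gt hτV)] at this
    have hTb : -s ≤ ((k:ℝ) + 1) * τV := by
      rcases le_or_gt (KV - 1) ⌊(-s) / τV⌋₊ with hcase | hcase
      · have hk : k = KV - 1 := by rw [hkdef]; exact min_eq_left hcase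
        have hke : ((k:ℝ) + 1) = (KV:ℝ) := by
          rw [hk, Nat.cast_sub hKV]; simp
        rw [hke]; linarith
      · have hk : k = ⌊(-s) / τV⌋₊ := by rw [hkdef]; exact min_eq_right hcase.le
        have h2 : (-s) / τV < (k:ℝ) + 1 := by
          rw [hk]
          exact_mod_cast Nat.lt_succ_floor _
        have := (div_lt_iff₀ hτV).1 h2
        linarith
    obtain ⟨A, hAdef⟩ : ∃ A : ℝ, A = t₀ - ((k:ℝ) + 1) * τV := ⟨_, rfl⟩
    obtain ⟨B, hBdef⟩ : ∃ B : ℝ, B = t₀ - (k:ℝ) * τV := ⟨_, rfl⟩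
    have hAB : A < B := by rw [hAdef, hBdef]; linarith
    have hAT : A ≤ t₀ + s := by rw [hAdef]; linarith
    have hTB : t₀ + s ≤ B := by rw [hBdef]; linarith
    have hA0 : t₀ - KV * τV ≤ A := by
      rw [hAdef]
      have := mul_le_mul_of_nonneg_right hk1' hτV.le
      linarith
    have hB0 : B ≤ t₀ := by
      rw [hBdef]
      have := mul_nonneg (Nat.cast_nonneg (α := ℝ) k) hτV.le
      linarith
    have hL2 : (0:ℝ) ≤ Lf * (Lf * (w * ρ)) := by positivity
    have hchord := aux_chord_deviation (g := x) (G := F) hAB hAT hTB hL2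
      (fun u v hu huv hv => hFTC u v (le_trans hA0 hu) huv (hv.trans hB0))
      (hFcont.mono (Icc_subset_Icc hA0 hB0))
      (fun u hu => by
        have h := hFlip u ⟨le_trans hA0 hu.1, hu.2.trans hB0⟩ (t₀ + s)
          ⟨le_trans hA0 hAT, hTB.trans hB0⟩
        rwa [Real.norm_eq_abs] at h)
    have hBA : B - A = τV := by rw [hAdef, hBdef]; ring
    rw [hBA] at hchord
    -- value at the chord point
    obtain ⟨θ, hθdef⟩ : ∃ θ : ℝ, θ = (B - (t₀ + s)) / τV := ⟨_, rfl⟩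
    obtain ⟨θ', hθ'def⟩ : ∃ θ' : ℝ, θ' = (t₀ + s - A) / τV := ⟨_, rfl⟩
    rw [← hθdef, ← hθ'def] at hchord
    have hθ0 : 0 ≤ θ := by rw [hθdef]; apply div_nonneg _ hτV.le; linarith
    have hθ'0 : 0 ≤ θ' := by rw [hθ'def]; apply div_nonneg _ hτV.le; linarith
    have hθsum : θ + θ' = 1 := by
      rw [hθdef, hθ'def]
      field_simp
      rw [hAdef, hBdef]; ring
    have hVA : V (x A) ≤ q * V (x t₀) := by
      have h := hdisc (k + 1) hk1
      have he : t₀ - ((k:ℕ) + 1 : ℕ) * τV = A := by rw [hAdef]; push_cast; ring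
      rwa [he] at h
    have hVB : V (x B) ≤ q * V (x t₀) := by
      have h := hdisc k (by omega)
      have he : t₀ - (k:ℝ) * τV = B := by rw [hBdef]
      rwa [he] at h
    have hVp : V (θ • x A + θ' • x B) ≤ q * V (x t₀) := by
      have hconv := hVconv.2 (mem_univ (x A)) (mem_univ (x B)) hθ0 hθ'0 hθsum
      calc V (θ • x A + θ' • x B) ≤ θ * V (x A) + θ' * V (x B) := hconv
        _ ≤ θ * (q * V (x t₀)) + θ' * (q * V (x t₀)) := by
            apply add_le_add
            · exact mul_le_mul_of_nonneg_left hVA hθ0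
            · exact mul_le_mul_of_nonneg_left hVB hθ'0
        _ = q * V (x t₀) := by rw [← add_mul, hθsum, one_mul]
    -- tangent line step
    obtain ⟨p, hpdef⟩ : ∃ p : EuclideanSpace ℝ (Fin n), p = θ • x A + θ' • x B := ⟨_, rfl⟩
    rw [← hpdef] at hchord hVp
    have htan := aux_convex_tangent hVconv hVdiff (x (t₀ + s)) (p - x (t₀ + s))
    have he2 : x (t₀ + s) + (p - x (t₀ + s)) = p := by abel
    rw [he2] at htan
    have hgrad := aux_grad_bound hc₁ hcc hVconv hVdiff hsandwich (x (t₀ + s))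
    have hxT : ‖x (t₀ + s)‖ ≤ ρ := le_ciSup hbdd1 ⟨s, mem_Icc.2 ⟨hs1, hs2⟩⟩
    have hdist : ‖p - x (t₀ + s)‖ ≤ Lf * (Lf * (w * ρ)) * τV ^ 2 / 8 := by
      rw [norm_sub_rev]
      exact hchord
    have habs : |(fderiv ℝ V (x (t₀ + s))) (p - x (t₀ + s))| ≤
        ‖fderiv ℝ V (x (t₀ + s))‖ * ‖p - x (t₀ + s)‖ := by
      rw [← Real.norm_eq_abs]
      exact (fderiv ℝ V (x (t₀ + s))).le_opNorm _
    have step : V (x (t₀ + s)) ≤ q * V (x t₀) +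
        (4 * c₂ - c₁) * ‖x (t₀ + s)‖ * (Lf * (Lf * (w * ρ)) * τV ^ 2 / 8) := by
      have h1 : V (x (t₀ + s)) ≤ V p + |(fderiv ℝ V (x (t₀ + s))) (p - x (t₀ + s))| := by
        have h2 := neg_abs_le ((fderiv ℝ V (x (t₀ + s))) (p - x (t₀ + s)))
        linarith
      have h3 : ‖fderiv ℝ V (x (t₀ + s))‖ * ‖p - x (t₀ + s)‖ ≤
          (4 * c₂ - c₁) * ‖x (t₀ + s)‖ * (Lf * (Lf * (w * ρ)) * τV ^ 2 / 8) :=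
        mul_le_mul hgrad hdist (norm_nonneg _) (by positivity)
      linarith [habs, hVp]
    have e1 : (4 * c₂ - c₁) * ‖x (t₀ + s)‖ * (Lf * (Lf * (w * ρ)) * τV ^ 2 / 8) ≤
        (4 * c₂ - c₁) * ρ * (Lf * (Lf * (w * ρ)) * τV ^ 2 / 8) := by
      apply mul_le_mul_of_nonneg_right _ (by positivity)
      exact mul_le_mul_of_nonneg_left hxT hM
    have e2 : (4 * c₂ - c₁) * ρ * (Lf * (Lf * (w * ρ)) * τV ^ 2 / 8) =
        (4 * c₂ - c₁) * Lf ^ 2 * w * τV ^ 2 / (8 * c₁) * (c₁ * ρ ^ 2) := by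
      field_simp
    have e3 : (4 * c₂ - c₁) * Lf ^ 2 * w * τV ^ 2 / (8 * c₁) * (c₁ * ρ ^ 2) ≤
        (4 * c₂ - c₁) * Lf ^ 2 * w * τV ^ 2 / (8 * c₁) * S :=
      mul_le_mul_of_nonneg_left hρsq (by positivity)
    rw [e2] at e1
    linarith [step, e1, e3]
  -- conclude
  have hSle : S ≤ q * V (x t₀) +
      (4 * c₂ - c₁) * Lf ^ 2 * w * τV ^ 2 / (8 * c₁) * S :=
    ciSup_le fun i => hpt i.1 i.2
  have hε1 : (4 * c₂ - c₁) * Lf ^ 2 * w * τV ^ 2 / (8 * c₁) < 1 :=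
    (div_lt_one (by positivity)).2 hsmall
  intro s hs
  have hVs : V (x (t₀ + s)) ≤ S := le_ciSup hbddS ⟨s, hs⟩
  have hfin : S ≤ q * V (x t₀) / (1 - (4 * c₂ - c₁) * Lf ^ 2 * w * τV ^ 2 / (8 * c₁)) := by
    rw [le_div_iff₀ (by linarith)]
    nlinarith [hSle]  -- NOTE

  calc V (x (t₀ + s)) ≤ S := hVs
    _ ≤ q * V (x t₀) / (1 - (4 * c₂ - c₁) * Lf ^ 2 * w * τV ^ 2 / (8 * c₁)) := hfin
    _ = q / (1 - (4 * c₂ - c₁) * Lf ^ 2 * w * τV ^ 2 / (8 * c₁)) * V (x t₀) := by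
        rw [div_mul_eq_mul_div]
end

section
/- Under the same hypotheses as the quantitative discretized-Razumikhin statement (f : C_r → ℝⁿ Fréchet differentiable and L_f-Lipschitz with f(0) = 0; V : ℝⁿ → ℝ convex differentiable with c₁·‖y‖₂² ≤ V(y) ≤ c₂·‖y‖₂²; K_V ≥ 1, τ_V > 0, r_V = K_V·τ_V ≥ r; x continuous on [t₀ - r_V - 2r, t₀] with x'(u) = f(x_u) for u ∈ [t₀ - r_V - r, t₀]; M = 4c₂ - c₁; ρ = sup_{s ∈ [-r_V,0]} ‖x(t₀+s)‖₂; w ≥ 1 with sup_{s ∈ [-r_V - 2r,0]} ‖x(t₀+s)‖₂ ≤ w·ρ; q > 1; and V(x(t₀ - k·τ_V)) ≤ q·V(x(t₀)) for all k ∈ {0, …, K_V}), if additionally M·L_f²·w·τ_V² ≤ 4c₁, then for every s ∈ [-r_V, 0]: V(x(t₀+s)) ≤ (q + q·M·L_f²·w·τ_V²/(4c₁))·V(x(t₀)). In particular the continuous Razumikhin condition holds with a factor q̃(τ_V) satisfying q̃(τ_V) = q + O(τ_V²) as τ_V → 0. -/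
open Set intervalIntegral

/-- Support-line inequality for a convex differentiable function. -/
lemma convex_support_line {E : Type*} [NormedAddCommGroup E] [NormedSpace ℝ E]
    {V : E → ℝ} (hc : ConvexOn ℝ univ V) (hd : Differentiable ℝ V) (a b : E) :
    V a + fderiv ℝ V a (b - a) ≤ V b := by
  set g : ℝ → E := fun t => AffineMap.lineMap a b t with hg
  have hga : ∀ t : ℝ, g t = a + t • (b - a) := by
    intro t; simp [hg, AffineMap.lineMap_apply_module]; module
  have hgd : ∀ t : ℝ, HasDerivAt g (b - a) t := by
    intro t
    have : HasDerivAt (fun t : ℝ => a + t • (b - a)) (b - a) t := by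
      simpa using ((hasDerivAt_id t).smul_const (b - a)).const_add a
    exact this.congr_of_eventuallyEq (Filter.Eventually.of_forall fun s => (hga s))
  have hVg : ∀ t : ℝ, HasDerivAt (V ∘ g) (fderiv ℝ V (g t) (b - a)) t := fun t =>
    (hd (g t)).hasFDerivAt.comp_hasDerivAt t (hgd t)
  have hconv : ConvexOn ℝ univ (V ∘ g) := by
    simpa [hg] using hc.comp_affineMap (AffineMap.lineMap a b)
  have hslope := hconv.le_slope_of_hasDerivAt (mem_univ (0:ℝ)) (mem_univ (1:ℝ))
    zero_lt_one (hVg 0)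
  have hg0 : g 0 = a := by simp [hga]
  have hg1 : g 1 = b := by rw [hga]; module
  rw [slope_def_field] at hslope
  simp only [hg0, hg1, Function.comp] at hslope
  have : (V b - V a) / (1 - 0) = V b - V a := by norm_num
  rw [this] at hslope
  linarith

/-- Sharp chord-deviation bound: if `x` has a Lipschitz derivative `F` on `[a,b]`
then `x` deviates from its chord by at most `L (b-a)^2 / 8`. -/
lemma chord_deviation {E : Type*} [NormedAddCommGroup E] [NormedSpace ℝ E] [CompleteSpace E]
    {x F : ℝ → E} {a b u L : ℝ} (hab : a < b) (hu : u ∈ Icc a b) (hL : 0 ≤ L)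
    (hx : ContinuousOn x (Icc a b))
    (hder : ∀ t ∈ Ioo a b, HasDerivWithinAt x (F t) (Ioi t) t)
    (hFc : ContinuousOn F (Icc a b))
    (hlip : ∀ s ∈ Icc a b, ∀ t ∈ Icc a b, ‖F s - F t‖ ≤ L * |s - t|) :
    ‖x u - ((1 - (u - a) / (b - a)) • x a + ((u - a) / (b - a)) • x b)‖
      ≤ L * (b - a) ^ 2 / 8 := by
  have hτ : 0 < b - a := sub_pos.2 hab
  set τ : ℝ := b - a with hτdef
  set h : ℝ := u - a with hhdef
  set θ : ℝ := h / τ with hθdef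
  have hh0 : 0 ≤ h := by simp [hhdef]; linarith [hu.1]
  have hhτ : h ≤ τ := by simp [hhdef, hτdef]; linarith [hu.2]
  have hθ0 : 0 ≤ θ := div_nonneg hh0 hτ.le
  have hθ1 : θ ≤ 1 := (div_le_one hτ).2 hhτ
  have hau : a ≤ u := hu.1
  have hub : u ≤ b := hu.2
  -- FTC on [a,u] and [u,b]
  have hFc1 : ContinuousOn F (Icc a u) := hFc.mono (Icc_subset_Icc le_rfl hub)
  have hFc2 : ContinuousOn F (Icc u b) := hFc.mono (Icc_subset_Icc hau le_rfl)
  have i1 : ∫ t in a..u, F t = x u - x a := by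
    apply integral_eq_sub_of_hasDeriv_right_of_le hau
      (hx.mono (Icc_subset_Icc le_rfl hub))
      (fun t ht => hder t ⟨ht.1, lt_of_lt_of_le ht.2 hub⟩)
    exact (hFc1.mono (by rw [uIcc_of_le hau])).intervalIntegrable
  have i2 : ∫ t in u..b, F t = x b - x u := by
    apply integral_eq_sub_of_hasDeriv_right_of_le hub
      (hx.mono (Icc_subset_Icc hau le_rfl))
      (fun t ht => hder t ⟨lt_of_le_of_lt hau ht.1, ht.2⟩)
    exact (hFc2.mono (by rw [uIcc_of_le hub])).intervalIntegrable
  have int1 : IntervalIntegrable (fun t => F t - F u) MeasureTheory.volume a u :=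
    ((hFc1.mono (by rw [uIcc_of_le hau])).sub continuousOn_const).intervalIntegrable
  have int2 : IntervalIntegrable (fun t => F t - F u) MeasureTheory.volume u b :=
    ((hFc2.mono (by rw [uIcc_of_le hub])).sub continuousOn_const).intervalIntegrable
  have j1 : ∫ t in a..u, (F t - F u) = (x u - x a) - h • F u := by
    rw [intervalIntegral.integral_sub
      ((hFc1.mono (by rw [uIcc_of_le hau])).intervalIntegrable) intervalIntegrable_const,
      i1, intervalIntegral.integral_const]
  have j2 : ∫ t in u..b, (F t - F u) = (x b - x u) - (τ - h) • F u := by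
    rw [intervalIntegral.integral_sub
      ((hFc2.mono (by rw [uIcc_of_le hub])).intervalIntegrable) intervalIntegrable_const,
      i2, intervalIntegral.integral_const]
    have : b - u = τ - h := by rw [hτdef, hhdef]; ring
    rw [this]
  have hθτ : θ * τ = h := div_mul_cancel₀ h hτ.ne'
  have hkey : x u - ((1 - θ) • x a + θ • x b)
      = (1 - θ) • (∫ t in a..u, (F t - F u)) - θ • (∫ t in u..b, (F t - F u)) := by
    rw [j1, j2]
    have e1 : (1 - θ) • ((x u - x a) - h • F u) - θ • ((x b - x u) - (τ - h) • F u)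
        = (x u - ((1 - θ) • x a + θ • x b)) + (θ * τ - h) • F u := by module
    rw [e1, hθτ, sub_self, zero_smul, add_zero]
  -- norm bounds on the two integrals
  have n1 : ‖∫ t in a..u, (F t - F u)‖ ≤ L * h ^ 2 / 2 := by
    have step1 : ‖∫ t in a..u, (F t - F u)‖ ≤ ∫ t in a..u, ‖F t - F u‖ :=
      intervalIntegral.norm_integral_le_integral_norm hau
    have step2 : (∫ t in a..u, ‖F t - F u‖) ≤ ∫ t in a..u, L * (u - t) := by
      apply intervalIntegral.integral_mono_on hau
        (int1.norm)
        ((continuous_const.mul (continuous_const.sub continuous_id)).intervalIntegrable a u)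
      intro t ht
      have := hlip t (Icc_subset_Icc le_rfl hub ht) u hu
      rwa [abs_of_nonpos (by linarith [ht.2] : t - u ≤ 0), neg_sub] at this
    have step3 : (∫ t in a..u, L * (u - t)) = L * h ^ 2 / 2 := by
      rw [intervalIntegral.integral_const_mul]
      have : ∫ t in a..u, (u - t) = u * (u - a) - (u ^ 2 - a ^ 2) / 2 := by
        rw [intervalIntegral.integral_sub intervalIntegrable_const
          (intervalIntegral.intervalIntegrable_id), intervalIntegral.integral_const,
          integral_id]
        simp [smul_eq_mul]; ring
      rw [this, hhdef]; ring
    calc ‖∫ t in a..u, (F t - F u)‖ ≤ ∫ t in a..u, ‖F t - F u‖ := step1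
      _ ≤ ∫ t in a..u, L * (u - t) := step2
      _ = L * h ^ 2 / 2 := step3
  have n2 : ‖∫ t in u..b, (F t - F u)‖ ≤ L * (τ - h) ^ 2 / 2 := by
    have step1 : ‖∫ t in u..b, (F t - F u)‖ ≤ ∫ t in u..b, ‖F t - F u‖ :=
      intervalIntegral.norm_integral_le_integral_norm hub
    have step2 : (∫ t in u..b, ‖F t - F u‖) ≤ ∫ t in u..b, L * (t - u) := by
      apply intervalIntegral.integral_mono_on hub
        (int2.norm)
        ((continuous_const.mul (continuous_id.sub continuous_const)).intervalIntegrable u b)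
      intro t ht
      have := hlip t (Icc_subset_Icc hau le_rfl ht) u hu
      rwa [abs_of_nonneg (by linarith [ht.1] : 0 ≤ t - u)] at this
    have step3 : (∫ t in u..b, L * (t - u)) = L * (τ - h) ^ 2 / 2 := by
      rw [intervalIntegral.integral_const_mul]
      have : ∫ t in u..b, (t - u) = (b ^ 2 - u ^ 2) / 2 - u * (b - u) := by
        rw [intervalIntegral.integral_sub (intervalIntegral.intervalIntegrable_id)
          intervalIntegrable_const, intervalIntegral.integral_const, integral_id]
        simp [smul_eq_mul]; ring
      rw [this, hhdef, hτdef]; ring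
    calc ‖∫ t in u..b, (F t - F u)‖ ≤ ∫ t in u..b, ‖F t - F u‖ := step1
      _ ≤ ∫ t in u..b, L * (t - u) := step2
      _ = L * (τ - h) ^ 2 / 2 := step3
  -- combine
  have : ‖x u - ((1 - θ) • x a + θ • x b)‖
      ≤ (1 - θ) * (L * h ^ 2 / 2) + θ * (L * (τ - h) ^ 2 / 2) := by
    rw [hkey]
    calc ‖(1 - θ) • (∫ t in a..u, (F t - F u)) - θ • (∫ t in u..b, (F t - F u))‖
        ≤ ‖(1 - θ) • (∫ t in a..u, (F t - F u))‖ + ‖θ • (∫ t in u..b, (F t - F u))‖ :=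
          norm_sub_le _ _
      _ = (1 - θ) * ‖∫ t in a..u, (F t - F u)‖ + θ * ‖∫ t in u..b, (F t - F u)‖ := by
          rw [norm_smul, norm_smul, Real.norm_eq_abs, Real.norm_eq_abs,
            abs_of_nonneg (by linarith), abs_of_nonneg hθ0]
      _ ≤ (1 - θ) * (L * h ^ 2 / 2) + θ * (L * (τ - h) ^ 2 / 2) := by
          gcongr <;> linarith
  have heq : (1 - θ) * (L * h ^ 2 / 2) + θ * (L * (τ - h) ^ 2 / 2)
      = L * (h * (τ - h)) / 2 := by
    rw [hθdef]; field_simp; ring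
  have hfin : L * (h * (τ - h)) / 2 ≤ L * τ ^ 2 / 8 := by
    have : h * (τ - h) ≤ τ ^ 2 / 4 := by nlinarith [sq_nonneg (τ - 2 * h)]
    nlinarith
  calc ‖x u - ((1 - θ) • x a + θ • x b)‖
      ≤ (1 - θ) * (L * h ^ 2 / 2) + θ * (L * (τ - h) ^ 2 / 2) := this
    _ = L * (h * (τ - h)) / 2 := heq
    _ ≤ L * τ ^ 2 / 8 := hfin

set_option maxHeartbeats 2000000 in
/-- Asymptotic form of Proposition 2: under `M·L_f²·w·τ_V² ≤ 4c₁` the continuous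
Razumikhin condition holds with factor `q + q·M·L_f²·w·τ_V²/(4c₁)`, i.e. the inflation
of the Razumikhin factor `q` introduced by discretization is `O(τ_V²)`. -/
theorem discretized_razumikhin_asymptotic
    {n : ℕ} {r Lf q c₁ c₂ τV w : ℝ} {KV : ℕ}
    (hr : 0 < r) (hLf : 0 < Lf) (hq : 1 < q) (hc₁ : 0 < c₁) (hc₂ : 0 < c₂)
    (hKV : 1 ≤ KV) (hτV : 0 < τV) (hrV : r ≤ KV * τV)
    (f : C(Icc (-r) (0:ℝ), EuclideanSpace ℝ (Fin n)) → EuclideanSpace ℝ (Fin n))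
    (hfdiff : Differentiable ℝ f)
    (hflip : LipschitzWith (Real.toNNReal Lf) f) (hf0 : f 0 = 0)
    (V : EuclideanSpace ℝ (Fin n) → ℝ)
    (hVconv : ConvexOn ℝ univ V) (hVdiff : Differentiable ℝ V)
    (hsandwich : ∀ y : EuclideanSpace ℝ (Fin n),
      c₁ * ‖y‖ ^ 2 ≤ V y ∧ V y ≤ c₂ * ‖y‖ ^ 2)
    (t₀ : ℝ) (x : ℝ → EuclideanSpace ℝ (Fin n))
    (hxc : ContinuousOn x (Icc (t₀ - KV * τV - 2 * r) t₀))
    (hsol : ∀ u : ℝ, t₀ - KV * τV - r ≤ u → u ≤ t₀ →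
      ∀ xu : C(Icc (-r) (0:ℝ), EuclideanSpace ℝ (Fin n)),
        (∀ s : Icc (-r) (0:ℝ), xu s = x (u + s.1)) →
        HasDerivWithinAt x (f xu) (Icc (t₀ - KV * τV - 2 * r) t₀) u)
    (hw : 1 ≤ w)
    (hwρ : (⨆ s : Icc (-(KV * τV) - 2 * r) (0:ℝ), ‖x (t₀ + s.1)‖) ≤
      w * ⨆ s : Icc (-(KV * τV)) (0:ℝ), ‖x (t₀ + s.1)‖)
    (hdisc : ∀ k : ℕ, k ≤ KV → V (x (t₀ - k * τV)) ≤ q * V (x t₀))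
    (hsmall : (4 * c₂ - c₁) * Lf ^ 2 * w * τV ^ 2 ≤ 4 * c₁) :
    ∀ s ∈ Icc (-(KV * τV)) (0:ℝ),
      V (x (t₀ + s)) ≤
        (q + q * ((4 * c₂ - c₁) * Lf ^ 2 * w * τV ^ 2) / (4 * c₁)) * V (x t₀) := by
  intro s hs
  have hV0 : ∀ y : EuclideanSpace ℝ (Fin n), 0 ≤ V y := fun y =>
    le_trans (by positivity) (hsandwich y).1
  -- dispose of the degenerate case n = 0
  rcases Nat.eq_zero_or_pos n with hn | hn
  · have hz : ∀ y : EuclideanSpace ℝ (Fin n), V y = 0 := by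
      intro y
      have hy0 : y = 0 := by subst hn; exact Subsingleton.elim y 0
      rw [hy0]
      have h2 := (hsandwich 0).2
      simp at h2
      exact le_antisymm h2 (hV0 _)
    rw [hz, hz, mul_zero]
  have hw0 : 0 < w := lt_of_lt_of_le one_pos hw
  -- c₁ ≤ c₂ and positivity of M
  have hcc : c₁ ≤ c₂ := by
    have h := hsandwich (EuclideanSpace.single (⟨0, hn⟩ : Fin n) (1:ℝ))
    rw [EuclideanSpace.norm_single] at h
    simp at h; linarith [h.1.trans h.2]
  have hMpos : 0 < 4 * c₂ - c₁ := by linarith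
  have hrVpos : (0:ℝ) < KV * τV := lt_of_lt_of_le hr hrV
  have hle2 : t₀ - KV * τV - 2 * r ≤ t₀ := by linarith
  -- continuous extension of x
  set xt : ℝ → EuclideanSpace ℝ (Fin n) :=
    IccExtend hle2 ((Icc (t₀ - KV * τV - 2 * r) t₀).restrict x) with hxtdef
  have hxt_cont : Continuous xt := hxc.restrict.Icc_extend'
  have hxt_eq : ∀ t, t ∈ Icc (t₀ - KV * τV - 2 * r) t₀ → xt t = x t := by
    intro t ht
    rw [hxtdef, IccExtend_of_mem hle2 _ ht]
    rfl
  -- histories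
  set hist : ℝ → C(Icc (-r) (0:ℝ), EuclideanSpace ℝ (Fin n)) :=
    fun u => ⟨fun σ => xt (u + σ.1),
      hxt_cont.comp (continuous_const.add continuous_subtype_val)⟩ with histdef
  have hist_eq : ∀ u, t₀ - KV * τV - r ≤ u → u ≤ t₀ →
      ∀ σ : Icc (-r) (0:ℝ), hist u σ = x (u + σ.1) := by
    intro u h1 h2 σ
    exact hxt_eq _ ⟨by linarith [σ.2.1], by linarith [σ.2.2]⟩
  have hd : ∀ u ∈ Icc (t₀ - KV * τV - r) t₀,
      HasDerivWithinAt x (f (hist u)) (Icc (t₀ - KV * τV - 2 * r) t₀) u :=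
    fun u hu => hsol u hu.1 hu.2 (hist u) (hist_eq u hu.1 hu.2)
  -- supremum facts
  have hφcont : ContinuousOn (fun σ => ‖x (t₀ + σ)‖) (Icc (-(KV * τV) - 2 * r) 0) := by
    apply ContinuousOn.norm
    apply hxc.comp (continuous_const.add continuous_id).continuousOn
    intro σ hσ
    exact ⟨by simp; linarith [hσ.1], by simp; linarith [hσ.2]⟩
  have hsubN : Icc (-(KV * τV)) (0:ℝ) ⊆ Icc (-(KV * τV) - 2 * r) 0 :=
    Icc_subset_Icc (by linarith) le_rfl
  obtain ⟨σw, hσwmem, hσwmax⟩ :=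
    isCompact_Icc.exists_isMaxOn (nonempty_Icc.2 (by linarith : -(KV * τV) - 2 * r ≤ (0:ℝ)))
      hφcont
  have hbddW : BddAbove (range fun σ : Icc (-(KV * τV) - 2 * r) (0:ℝ) => ‖x (t₀ + σ.1)‖) := by
    refine ⟨‖x (t₀ + σw)‖, ?_⟩
    rintro v ⟨σ, rfl⟩
    exact hσwmax σ.2
  have hbddN : BddAbove (range fun σ : Icc (-(KV * τV)) (0:ℝ) => ‖x (t₀ + σ.1)‖) := by
    refine ⟨‖x (t₀ + σw)‖, ?_⟩
    rintro v ⟨σ, rfl⟩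
    exact hσwmax (hsubN σ.2)
  have h0memN : (0:ℝ) ∈ Icc (-(KV * τV)) (0:ℝ) := ⟨by linarith, le_rfl⟩
  haveI : Nonempty ↑(Icc (-(KV * τV)) (0:ℝ)) := ⟨⟨0, h0memN⟩⟩
  set ρ : ℝ := ⨆ σ : Icc (-(KV * τV)) (0:ℝ), ‖x (t₀ + σ.1)‖ with hρdef
  have hnarrow : ∀ σ, -(KV * τV) ≤ σ → σ ≤ 0 → ‖x (t₀ + σ)‖ ≤ ρ := by
    intro σ h1 h2
    exact le_ciSup hbddN ⟨σ, ⟨h1, h2⟩⟩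
  have hρ0 : 0 ≤ ρ := le_trans (norm_nonneg _) (hnarrow 0 h0memN.1 h0memN.2)
  have hwide : ∀ σ, -(KV * τV) - 2 * r ≤ σ → σ ≤ 0 → ‖x (t₀ + σ)‖ ≤ w * ρ := by
    intro σ h1 h2
    exact le_trans (le_ciSup hbddW ⟨σ, ⟨h1, h2⟩⟩) hwρ
  obtain ⟨σs, hσsmem, hσsmax⟩ :=
    isCompact_Icc.exists_isMaxOn (nonempty_Icc.2 (by linarith : -(KV * τV) ≤ (0:ℝ)))
      (hφcont.mono hsubN)
  have hρatt : ρ ≤ ‖x (t₀ + σs)‖ := ciSup_le fun σ => hσsmax σ.2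
  -- Lipschitz/bound facts
  have hLfc : (Real.toNNReal Lf : ℝ) = Lf := Real.coe_toNNReal _ hLf.le
  have hwρ0 : 0 ≤ w * ρ := mul_nonneg hw0.le hρ0
  have hB0 : 0 ≤ Lf * (w * ρ) := mul_nonneg hLf.le hwρ0
  have hFnorm : ∀ u, t₀ - KV * τV - r ≤ u → u ≤ t₀ → ‖f (hist u)‖ ≤ Lf * (w * ρ) := by
    intro u h1 h2
    have h3 : ‖hist u‖ ≤ w * ρ := by
      rw [ContinuousMap.norm_le _ hwρ0]
      intro σ
      rw [hist_eq u h1 h2 σ]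
      have he : u + σ.1 = t₀ + (u + σ.1 - t₀) := by ring
      rw [he]
      exact hwide _ (by linarith [σ.2.1]) (by linarith [σ.2.2])
    calc ‖f (hist u)‖ = ‖f (hist u) - f 0‖ := by rw [hf0, sub_zero]
      _ = dist (f (hist u)) (f 0) := (dist_eq_norm _ _).symm
      _ ≤ Lf * dist (hist u) 0 := by
          have := hflip.dist_le_mul (hist u) 0
          rwa [hLfc] at this
      _ = Lf * ‖hist u‖ := by rw [dist_zero_right]
      _ ≤ Lf * (w * ρ) := mul_le_mul_of_nonneg_left h3 hLf.le
  have hxlip : ∀ a' ∈ Icc (t₀ - KV * τV - r) t₀, ∀ b' ∈ Icc (t₀ - KV * τV - r) t₀,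
      ‖x b' - x a'‖ ≤ (Lf * (w * ρ)) * ‖b' - a'‖ := by
    intro a' ha' b' hb'
    exact (convex_Icc _ _).norm_image_sub_le_of_norm_hasDerivWithin_le
      (fun u hu => (hd u hu).mono (Icc_subset_Icc (by linarith) le_rfl))
      (fun u hu => hFnorm u hu.1 hu.2) ha' hb'
  have hFlip : ∀ u ∈ Icc (t₀ - KV * τV) t₀, ∀ v ∈ Icc (t₀ - KV * τV) t₀,
      ‖f (hist u) - f (hist v)‖ ≤ (Lf * (Lf * (w * ρ))) * |u - v| := by
    intro u hu v hv
    have hdistσ : ∀ σ : Icc (-r) (0:ℝ),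
        dist (hist u σ) (hist v σ) ≤ (Lf * (w * ρ)) * |u - v| := by
      intro σ
      rw [hist_eq u (by linarith [hu.1]) hu.2 σ, hist_eq v (by linarith [hv.1]) hv.2 σ,
        dist_eq_norm]
      have := hxlip (v + σ.1) ⟨by linarith [σ.2.1, hv.1], by linarith [σ.2.2, hv.2]⟩
        (u + σ.1) ⟨by linarith [σ.2.1, hu.1], by linarith [σ.2.2, hu.2]⟩
      simpa [Real.norm_eq_abs, add_sub_add_right_eq_sub] using this
    have hdist : dist (hist u) (hist v) ≤ (Lf * (w * ρ)) * |u - v| :=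
      (ContinuousMap.dist_le (mul_nonneg hB0 (abs_nonneg _))).mpr hdistσ
    calc ‖f (hist u) - f (hist v)‖ = dist (f (hist u)) (f (hist v)) := (dist_eq_norm _ _).symm
      _ ≤ Lf * dist (hist u) (hist v) := by
          have := hflip.dist_le_mul (hist u) (hist v)
          rwa [hLfc] at this
      _ ≤ Lf * ((Lf * (w * ρ)) * |u - v|) := mul_le_mul_of_nonneg_left hdist hLf.le
      _ = (Lf * (Lf * (w * ρ))) * |u - v| := by ring
  -- gradient bound
  have hsupp := fun a b => convex_support_line hVconv hVdiff a b
  have hV00 : V 0 = 0 := by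
    have h2 := (hsandwich 0).2
    simp at h2
    exact le_antisymm h2 (hV0 _)
  have hmin : fderiv ℝ V 0 = 0 := by
    apply IsLocalMin.fderiv_eq_zero
    apply Filter.Eventually.of_forall
    intro z
    rw [hV00]; exact hV0 z
  have hgradb : ∀ y z : EuclideanSpace ℝ (Fin n),
      fderiv ℝ V y z ≤ (4 * c₂ - c₁) * ‖y‖ * ‖z‖ := by
    intro y z
    rcases eq_or_ne y 0 with hy | hy
    · rw [hy, hmin]; simp
    rcases eq_or_ne z 0 with hz | hz
    · rw [hz]; simp
    have hyn : 0 < ‖y‖ := norm_pos_iff.2 hy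
    have hzn : 0 < ‖z‖ := norm_pos_iff.2 hz
    set z' : EuclideanSpace ℝ (Fin n) := (‖y‖ / ‖z‖) • z with hz'def
    have hz'norm : ‖z'‖ = ‖y‖ := by
      rw [hz'def, norm_smul, Real.norm_eq_abs, abs_of_nonneg (by positivity)]
      field_simp
    have h1 : fderiv ℝ V y z' ≤ V (y + z') - V y := by
      have h := hsupp y (y + z')
      rw [add_sub_cancel_left] at h
      linarith
    have h3 : V (y + z') ≤ 4 * c₂ * ‖y‖ ^ 2 := by
      have h4 := (hsandwich (y + z')).2
      have h5 : ‖y + z'‖ ≤ 2 * ‖y‖ := by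
        calc ‖y + z'‖ ≤ ‖y‖ + ‖z'‖ := norm_add_le _ _
          _ = 2 * ‖y‖ := by rw [hz'norm]; ring
      have h6 : ‖y + z'‖ ^ 2 ≤ (2 * ‖y‖) ^ 2 :=
        pow_le_pow_left₀ (norm_nonneg _) h5 2
      have h7 := mul_le_mul_of_nonneg_left h6 hc₂.le
      nlinarith [h4, h7]
    have h5 : fderiv ℝ V y z' ≤ (4 * c₂ - c₁) * ‖y‖ ^ 2 := by
      have := (hsandwich y).1
      linarith
    have h6 : z = (‖z‖ / ‖y‖) • z' := by
      rw [hz'def, smul_smul]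
      have : ‖z‖ / ‖y‖ * (‖y‖ / ‖z‖) = 1 := by field_simp
      rw [this, one_smul]
    calc fderiv ℝ V y z = (‖z‖ / ‖y‖) * fderiv ℝ V y z' := by
          conv_lhs => rw [h6]
          rw [map_smul]; rfl
      _ ≤ (‖z‖ / ‖y‖) * ((4 * c₂ - c₁) * ‖y‖ ^ 2) :=
          mul_le_mul_of_nonneg_left h5 (by positivity)
      _ = (4 * c₂ - c₁) * ‖y‖ * ‖z‖ := by field_simp
  -- the key pointwise bound
  have hC0 : 0 ≤ (4 * c₂ - c₁) * Lf ^ 2 * w * τV ^ 2 / 8 := by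
    apply div_nonneg _ (by norm_num)
    apply mul_nonneg (mul_nonneg (mul_nonneg hMpos.le (by positivity)) hw0.le) (by positivity)
  have key : ∀ σ, -(KV * τV) ≤ σ → σ ≤ 0 →
      V (x (t₀ + σ)) ≤ q * V (x t₀) + ((4 * c₂ - c₁) * Lf ^ 2 * w * τV ^ 2 / 8) * ρ ^ 2 := by
    intro σ hσ1 hσ2
    rcases eq_or_lt_of_le hσ2 with h0 | hσlt
    · rw [h0, add_zero]
      have h := hdisc 0 (Nat.zero_le _)
      simp at h
      have : 0 ≤ ((4 * c₂ - c₁) * Lf ^ 2 * w * τV ^ 2 / 8) * ρ ^ 2 :=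
        mul_nonneg hC0 (sq_nonneg _)
      linarith
    · set k : ℕ := ⌈(-σ) / τV⌉₊ with hkdef
      have hσpos : 0 < -σ := by linarith
      have hkpos : 0 < k := Nat.ceil_pos.mpr (div_pos hσpos hτV)
      have hkKV : k ≤ KV := by
        apply Nat.ceil_le.mpr
        rw [div_le_iff₀ hτV]
        linarith
      have hcast : ((k - 1 : ℕ) : ℝ) = (k : ℝ) - 1 := by
        push_cast [Nat.cast_sub hkpos]
        ring
      have hkup : ((-σ) / τV : ℝ) ≤ k := Nat.le_ceil _
      have hkdn : (k : ℝ) < (-σ) / τV + 1 := Nat.ceil_lt_add_one (by positivity)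
      have hua : t₀ - k * τV ≤ t₀ + σ := by
        rw [div_le_iff₀ hτV] at hkup
        linarith
      have hub : t₀ + σ ≤ t₀ - ((k : ℝ) - 1) * τV := by
        have h' : ((k : ℝ) - 1) < -σ / τV := by linarith
        have h2 := mul_lt_mul_of_pos_right h' hτV
        rw [div_mul_cancel₀ _ hτV.ne'] at h2
        linarith
      have hab : t₀ - k * τV < t₀ - ((k : ℝ) - 1) * τV := by nlinarith
      have hage : t₀ - KV * τV ≤ t₀ - k * τV := by
        have : (k : ℝ) ≤ KV := Nat.cast_le.mpr hkKV
        nlinarith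
      have hble : t₀ - ((k : ℝ) - 1) * τV ≤ t₀ := by
        have : (1 : ℝ) ≤ k := by exact_mod_cast hkpos
        nlinarith
      have hVa : V (x (t₀ - k * τV)) ≤ q * V (x t₀) := hdisc k hkKV
      have hVb : V (x (t₀ - ((k : ℝ) - 1) * τV)) ≤ q * V (x t₀) := by
        have h := hdisc (k - 1) (le_trans (Nat.sub_le k 1) hkKV)
        rwa [hcast] at h
      have hsubJ : Icc (t₀ - k * τV) (t₀ - ((k : ℝ) - 1) * τV) ⊆
          Icc (t₀ - KV * τV) t₀ := Icc_subset_Icc hage hble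
      -- chord deviation
      have hchord := chord_deviation (x := x) (F := fun t => f (hist t))
        (L := Lf * (Lf * (w * ρ))) hab ⟨hua, hub⟩ (mul_nonneg hLf.le hB0)
        (hxc.mono (Icc_subset_Icc (by linarith) hble))
        (by
          intro t ht
          have h1 := hd t ⟨by linarith [ht.1], by linarith [ht.2]⟩
          exact (h1.hasDerivAt (Icc_mem_nhds (by linarith [ht.1]) (by linarith [ht.2]))
            ).hasDerivWithinAt)
        (by
          apply LipschitzOnWith.continuousOn (K := Real.toNNReal (Lf * (Lf * (w * ρ))))
          apply LipschitzOnWith.of_dist_le_mul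
          intro u hu v hv
          rw [dist_eq_norm, Real.coe_toNNReal _ (mul_nonneg hLf.le hB0), Real.dist_eq]
          exact hFlip u (hsubJ hu) v (hsubJ hv))
        (fun s' hs' t' ht' => hFlip s' (hsubJ hs') t' (hsubJ ht'))
      have hbma : t₀ - ((k : ℝ) - 1) * τV - (t₀ - k * τV) = τV := by ring
      rw [hbma] at hchord
      set θ : ℝ := (t₀ + σ - (t₀ - k * τV)) / τV with hθdef
      have hθ0 : 0 ≤ θ := div_nonneg (by linarith) hτV.le
      have hθ1 : θ ≤ 1 := by
        rw [hθdef, div_le_one hτV]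
        linarith
      set p : EuclideanSpace ℝ (Fin n) :=
        (1 - θ) • x (t₀ - k * τV) + θ • x (t₀ - ((k : ℝ) - 1) * τV) with hpdef
      have hVp : V p ≤ q * V (x t₀) := by
        have h := hVconv.2 (mem_univ (x (t₀ - k * τV)))
          (mem_univ (x (t₀ - ((k : ℝ) - 1) * τV)))
          (by linarith : (0:ℝ) ≤ 1 - θ) hθ0 (by ring)
        have h2 : (1 - θ) * V (x (t₀ - k * τV)) + θ * V (x (t₀ - ((k : ℝ) - 1) * τV))
            ≤ q * V (x t₀) := by
          nlinarith [mul_le_mul_of_nonneg_left hVa (by linarith : (0:ℝ) ≤ 1 - θ),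
            mul_le_mul_of_nonneg_left hVb hθ0]
        exact le_trans h h2
      have hyp : V (x (t₀ + σ)) ≤ V p + fderiv ℝ V (x (t₀ + σ)) (x (t₀ + σ) - p) := by
        have h := hsupp (x (t₀ + σ)) p
        have h2 : fderiv ℝ V (x (t₀ + σ)) (p - x (t₀ + σ))
            = - fderiv ℝ V (x (t₀ + σ)) (x (t₀ + σ) - p) := by
          rw [← map_neg, neg_sub]
        linarith [h, h2.le, h2.ge]
      have hnormy : ‖x (t₀ + σ)‖ ≤ ρ := hnarrow σ hσ1 hσ2
      have hnorme : ‖x (t₀ + σ) - p‖ ≤ Lf * (Lf * (w * ρ)) * τV ^ 2 / 8 := by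
        rw [hpdef]
        exact hchord
      have hfd := hgradb (x (t₀ + σ)) (x (t₀ + σ) - p)
      have hprod : ‖x (t₀ + σ)‖ * ‖x (t₀ + σ) - p‖
          ≤ ρ * (Lf * (Lf * (w * ρ)) * τV ^ 2 / 8) :=
        mul_le_mul hnormy hnorme (norm_nonneg _) hρ0
      have hmul : (4 * c₂ - c₁) * (‖x (t₀ + σ)‖ * ‖x (t₀ + σ) - p‖)
          ≤ (4 * c₂ - c₁) * (ρ * (Lf * (Lf * (w * ρ)) * τV ^ 2 / 8)) :=
        mul_le_mul_of_nonneg_left hprod hMpos.le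
      have hring : (4 * c₂ - c₁) * (ρ * (Lf * (Lf * (w * ρ)) * τV ^ 2 / 8))
          = ((4 * c₂ - c₁) * Lf ^ 2 * w * τV ^ 2 / 8) * ρ ^ 2 := by ring
      linarith [hyp, hVp, hfd, hmul, hring.le, hring.ge]
  -- self-bounding step
  have hself : (c₁ - (4 * c₂ - c₁) * Lf ^ 2 * w * τV ^ 2 / 8) * ρ ^ 2 ≤ q * V (x t₀) := by
    have h1 := key σs hσsmem.1 hσsmem.2
    have h2 := (hsandwich (x (t₀ + σs))).1
    have h3 : ρ ^ 2 ≤ ‖x (t₀ + σs)‖ ^ 2 := pow_le_pow_left₀ hρ0 hρatt 2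
    have h4 := mul_le_mul_of_nonneg_left h3 hc₁.le
    linarith
  have hkey_s := key s hs.1 hs.2
  have hhalf : (4 * c₂ - c₁) * Lf ^ 2 * w * τV ^ 2 / 8 ≤ c₁ / 2 := by linarith
  have hfinal : q * V (x t₀) + ((4 * c₂ - c₁) * Lf ^ 2 * w * τV ^ 2 / 8) * ρ ^ 2
      ≤ (q + q * ((4 * c₂ - c₁) * Lf ^ 2 * w * τV ^ 2) / (4 * c₁)) * V (x t₀) := by
    have hexp : (q + q * ((4 * c₂ - c₁) * Lf ^ 2 * w * τV ^ 2) / (4 * c₁)) * V (x t₀)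
        = q * V (x t₀) + q * ((4 * c₂ - c₁) * Lf ^ 2 * w * τV ^ 2) * V (x t₀) / (4 * c₁) := by
      ring
    rw [hexp]
    have h4c₁ : (0:ℝ) < 4 * c₁ := by linarith
    rw [add_le_add_iff_left, le_div_iff₀ h4c₁]
    set C : ℝ := (4 * c₂ - c₁) * Lf ^ 2 * w * τV ^ 2 / 8 with hCdef
    have h8C : (4 * c₂ - c₁) * Lf ^ 2 * w * τV ^ 2 = 8 * C := by rw [hCdef]; ring
    rw [h8C]
    have hV0' : 0 ≤ V (x t₀) := hV0 _
    have hA := mul_le_mul_of_nonneg_left hself (by linarith : (0:ℝ) ≤ 2 * C)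
    have hB : 0 ≤ (c₁ - 2 * C) * C * ρ ^ 2 :=
      mul_nonneg (mul_nonneg (by linarith : (0:ℝ) ≤ c₁ - 2 * C) hC0) (sq_nonneg ρ)
    nlinarith [hA, hB]
  linarith
end

section
/- Let n ∈ ℕ, r > 0, 0 < t_f ≤ ∞, K_V ∈ ℕ with K_V ≥ 1, τ_V > 0, and set r_V = K_V·τ_V. Let x : [-r_V, t_f) → ℝⁿ be continuous and differentiable on [0, t_f). Suppose V : ℝⁿ → ℝ is differentiable and there exist constants c₁, c₂, α > 0 and q > 1 such that: (i) c₁·‖x(t)‖₂² ≤ V(x(t)) ≤ c₂·‖x(t)‖₂² for all t ∈ [-r_V, t_f); and (ii) for every t ∈ [0, t_f), if V(x(t - k·τ_V)) ≤ q·V(x(t)) for all k ∈ {0, 1, …, K_V}, then the derivative of the map t ↦ V(x(t)) at t is at most -α·V(x(t)). Then, with γ = min(α, (log q)/r_V)/2 and M = c₂/c₁, for all t, s with 0 ≤ t ≤ s < t_f one has ‖x(s)‖₂ ≤ M·e^{-γ(s-t)}·sup_{u ∈ [-r_V, 0]} ‖x(t+u)‖₂. -/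
open Set Topology Filter

/-- First part of the paper's Theorem 2: if the Lyapunov–Razumikhin loss with the
discretized Razumikhin condition vanishes along a trajectory, then the trajectory is
`(γ, M)`-exponentially decaying over `[0, t_f)`. -/
theorem discretized_razumikhin_exponential_decay
    {n : ℕ} {τV : ℝ} {KV : ℕ} (hKV : 1 ≤ KV) (hτV : 0 < τV)
    {tf : EReal} (htf : 0 < tf)
    (x : ℝ → EuclideanSpace ℝ (Fin n))
    (hxc : ContinuousOn x {u : ℝ | -(KV * τV) ≤ u ∧ (u : EReal) < tf})
    (hxd : ∀ t : ℝ, 0 ≤ t → (t : EReal) < tf → DifferentiableWithinAt ℝ x (Ici (0:ℝ)) t)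
    (V : EuclideanSpace ℝ (Fin n) → ℝ) (hV : Differentiable ℝ V)
    {c₁ c₂ α q : ℝ} (hc₁ : 0 < c₁) (hc₂ : 0 < c₂) (hα : 0 < α) (hq : 1 < q)
    (hsandwich : ∀ t : ℝ, -(KV * τV) ≤ t → (t : EReal) < tf →
      c₁ * ‖x t‖ ^ 2 ≤ V (x t) ∧ V (x t) ≤ c₂ * ‖x t‖ ^ 2)
    (hdecay : ∀ t : ℝ, 0 ≤ t → (t : EReal) < tf →
      (∀ k : ℕ, k ≤ KV → V (x (t - k * τV)) ≤ q * V (x t)) →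
      derivWithin (fun u => V (x u)) (Ici (0:ℝ)) t ≤ -α * V (x t)) :
    ∀ t s : ℝ, 0 ≤ t → t ≤ s → (s : EReal) < tf →
      ‖x s‖ ≤ (c₂ / c₁) *
        Real.exp (-(min α (Real.log q / (KV * τV)) / 2) * (s - t)) *
        ⨆ u : Icc (-(KV * τV)) (0:ℝ), ‖x (t + u.1)‖ := by
  intro t s ht hts hstf
  set rV : ℝ := (KV : ℝ) * τV with hrV_def
  have hrV : 0 < rV := by
    have h1 : (1:ℝ) ≤ (KV:ℝ) := by exact_mod_cast hKV
    nlinarith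
  set γb : ℝ := min α (Real.log q / rV) with hγb_def
  have hlogq : 0 < Real.log q := Real.log_pos hq
  have hq0 : (0:ℝ) < q := lt_trans one_pos hq
  have hγb_pos : 0 < γb := lt_min hα (div_pos hlogq hrV)
  have hγb_le_α : γb ≤ α := min_le_left _ _
  have hγbrV : γb * rV ≤ Real.log q := by
    have h1 : γb ≤ Real.log q / rV := min_le_right _ _
    calc γb * rV ≤ (Real.log q / rV) * rV := mul_le_mul_of_nonneg_right h1 hrV.le
      _ = Real.log q := div_mul_cancel₀ _ hrV.ne'
  have hlt_tf : ∀ u : ℝ, u ≤ s → (u : EReal) < tf := fun u hu =>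
    lt_of_le_of_lt (by exact_mod_cast hu) hstf
  set N : ℝ := ⨆ u : Icc (-rV) (0:ℝ), ‖x (t + u.1)‖ with hN_def
  set f : ℝ → ℝ := fun u => V (x u) with hf_def
  have hmem : ∀ u : ℝ, -rV ≤ u → u ≤ s → u ∈ {u : ℝ | -rV ≤ u ∧ (u : EReal) < tf} :=
    fun u h1 h2 => ⟨h1, hlt_tf u h2⟩
  have hφ : ContinuousOn (fun u => ‖x (t + u)‖) (Icc (-rV) (0:ℝ)) := by
    apply continuous_norm.comp_continuousOn
    apply hxc.comp ((continuous_add_left t).continuousOn)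
    intro u hu
    simp only [mem_Icc] at hu
    show t + u ∈ {u : ℝ | -rV ≤ u ∧ (u:EReal) < tf}
    exact hmem _ (by linarith [hu.1, ht]) (by linarith [hu.2])
  have hbdd : BddAbove (range fun u : Icc (-rV) (0:ℝ) => ‖x (t + u.1)‖) := by
    rw [show (fun u : Icc (-rV) (0:ℝ) => ‖x (t + u.1)‖)
        = (Icc (-rV) (0:ℝ)).restrict (fun u => ‖x (t+u)‖) from rfl,
      Set.restrict, Set.range_domRestrict]
    exact (isCompact_Icc.image_of_continuousOn hφ).bddAbove
  have hle_N : ∀ u : ℝ, -rV ≤ u → u ≤ 0 → ‖x (t + u)‖ ≤ N :=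
    fun u h1 h2 => le_ciSup hbdd ⟨u, h1, h2⟩
  have hN0 : 0 ≤ N := le_trans (norm_nonneg _) (by simpa using hle_N 0 (by linarith) le_rfl)
  have hfW : ∀ u : ℝ, t - rV ≤ u → u ≤ t → f u ≤ c₂ * N ^ 2 := by
    intro u h1 h2
    have hs2 := (hsandwich u (by linarith) (hlt_tf u (by linarith))).2
    have hnorm : ‖x u‖ ≤ N := by
      have h := hle_N (u - t) (by linarith) (by linarith)
      rw [show t + (u - t) = u by ring] at h
      exact h
    have hsq : ‖x u‖ ^ 2 ≤ N ^ 2 := pow_le_pow_left₀ (norm_nonneg _) hnorm 2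
    calc f u ≤ c₂ * ‖x u‖ ^ 2 := hs2
      _ ≤ c₂ * N ^ 2 := by nlinarith
  -- key estimate with slack
  have hkey : ∀ δ : ℝ, 0 < δ → δ < γb →
      f s ≤ (c₂ * N ^ 2 + δ) * Real.exp (-(γb - δ) * (s - t)) := by
    intro δ hδ0 hδγ
    set γ' : ℝ := γb - δ with hγ'_def
    have hγ'0 : 0 < γ' := by rw [hγ'_def]; linarith
    set C : ℝ := c₂ * N ^ 2 + δ with hC_def
    have hC0 : 0 < C := by positivity
    set B : ℝ → ℝ := fun u => C * Real.exp (-γ' * (u - t)) with hB_def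
    have hBcont : Continuous B := by rw [hB_def]; fun_prop
    have hBpos : ∀ u, 0 < B u := fun u => by rw [hB_def]; positivity
    have hfc : ContinuousOn f (Icc t s) := by
      apply hV.continuous.comp_continuousOn
      apply hxc.mono
      intro u hu
      simp only [mem_Icc] at hu
      exact hmem _ (by linarith [hu.1]) hu.2
    have hBshift : ∀ u a : ℝ, B (u - a) = B u * Real.exp (γ' * a) := by
      intro u a
      simp only [hB_def, mul_assoc, ← Real.exp_add]
      congr 2
      ring
    suffices h : ∀ u ∈ Icc t s, f u ≤ B u by
      have h2 := h s ⟨hts, le_rfl⟩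
      rw [hB_def] at h2
      simpa [hC_def, hγ'_def] using h2
    by_contra hcon
    push_neg at hcon
    obtain ⟨u₀, hu₀mem, hu₀⟩ := hcon
    set S : Set ℝ := {u | u ∈ Icc t s ∧ B u < f u} with hS_def
    have hSne : S.Nonempty := ⟨u₀, hu₀mem, hu₀⟩
    have hSbdd : BddBelow S := ⟨t, fun u hu => hu.1.1⟩
    set σ : ℝ := sInf S with hσ_def
    have hσt : t ≤ σ := le_csInf hSne fun u hu => hu.1.1
    have hσs : σ ≤ s := le_trans (csInf_le hSbdd ⟨hu₀mem, hu₀⟩) hu₀mem.2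
    have hσ0 : (0:ℝ) ≤ σ := le_trans ht hσt
    have hclosed : IsClosed {u | u ∈ Icc t s ∧ B u ≤ f u} := by
      have heqset : {u | u ∈ Icc t s ∧ B u ≤ f u}
          = Icc t s ∩ (fun u => f u - B u) ⁻¹' (Ici 0) := by
        ext u
        simp only [mem_setOf_eq, mem_inter_iff, mem_preimage, mem_Ici, sub_nonneg]
      rw [heqset]
      exact ContinuousOn.preimage_isClosed_of_isClosed (hfc.sub hBcont.continuousOn)
        isClosed_Icc isClosed_Ici
    have hσcl : σ ∈ {u | u ∈ Icc t s ∧ B u ≤ f u} := by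
      have h1 : σ ∈ closure S := csInf_mem_closure hSne hSbdd
      have h2 : closure S ⊆ {u | u ∈ Icc t s ∧ B u ≤ f u} :=
        hclosed.closure_subset_iff.mpr fun u hu => ⟨hu.1, hu.2.le⟩
      exact h2 h1
    have hft : f t ≤ c₂ * N ^ 2 := hfW t (by linarith) le_rfl
    have hBt : B t = C := by rw [hB_def]; simp
    have htσ : t < σ := by
      rcases lt_or_eq_of_le hσt with h | h
      · exact h
      · exfalso
        have h2 := hσcl.2
        rw [← h, hBt] at h2
        rw [hC_def] at h2
        linarith
    have hfB_lt : ∀ u ∈ Ico t σ, f u ≤ B u := by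
      intro u hu
      by_contra h
      have huS : u ∈ S := ⟨⟨hu.1, le_trans hu.2.le hσs⟩, lt_of_not_ge h⟩
      exact absurd (csInf_le hSbdd huS) (not_le.mpr hu.2)
    have hfσ_le : f σ ≤ B σ := by
      have hcl : σ ∈ closure (Ico t σ) := by
        rw [closure_Ico htσ.ne]
        exact ⟨htσ.le, le_rfl⟩
      have hne : (𝓝[Ico t σ] σ).NeBot := mem_closure_iff_nhdsWithin_neBot.mp hcl
      have hsub : Ico t σ ⊆ Icc t s := fun u hu => ⟨hu.1, le_trans hu.2.le hσs⟩
      have htf1 : Filter.Tendsto f (𝓝[Ico t σ] σ) (𝓝 (f σ)) :=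
        ((hfc σ ⟨htσ.le, hσs⟩).mono hsub).tendsto
      have htf2 : Filter.Tendsto B (𝓝[Ico t σ] σ) (𝓝 (B σ)) :=
        (hBcont.tendsto σ).mono_left nhdsWithin_le_nhds
      exact le_of_tendsto_of_tendsto htf1 htf2
        (eventually_mem_nhdsWithin.mono fun u hu => hfB_lt u hu)
    have heq : f σ = B σ := le_antisymm hfσ_le hσcl.2
    have hσnotS : σ ∉ S := fun h => absurd h.2 (not_lt.mpr hfσ_le)
    have hRaz : ∀ k : ℕ, k ≤ KV → f (σ - k * τV) ≤ q * f σ := by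
      intro k hk
      have hkτ : (k:ℝ) * τV ≤ rV := by
        have h : (k:ℝ) ≤ (KV:ℝ) := by exact_mod_cast hk
        rw [hrV_def]
        exact mul_le_mul_of_nonneg_right h hτV.le
      have hkτ0 : (0:ℝ) ≤ (k:ℝ) * τV := by positivity
      have hexpq : Real.exp (γ' * ((k:ℝ) * τV)) ≤ q := by
        have h1 : γ' * ((k:ℝ) * τV) ≤ γb * rV := by
          have hγ'γb : γ' ≤ γb := by rw [hγ'_def]; linarith
          nlinarith
        calc Real.exp (γ' * ((k:ℝ) * τV)) ≤ Real.exp (Real.log q) :=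
              Real.exp_le_exp.mpr (le_trans h1 hγbrV)
          _ = q := Real.exp_log hq0
      rw [heq]
      by_cases hcase : t ≤ σ - (k:ℝ) * τV
      · have hfBk : f (σ - k * τV) ≤ B (σ - k * τV) := by
          rcases lt_or_eq_of_le (show σ - (k:ℝ) * τV ≤ σ by linarith) with h | h
          · exact hfB_lt _ ⟨hcase, h⟩
          · rw [h]; exact le_of_eq heq
        calc f (σ - k * τV) ≤ B (σ - k * τV) := hfBk
          _ = B σ * Real.exp (γ' * ((k:ℝ) * τV)) := hBshift σ _
          _ ≤ B σ * q := mul_le_mul_of_nonneg_left hexpq (hBpos σ).le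
          _ = q * B σ := mul_comm _ _
      · push_neg at hcase
        have h1 : f (σ - k * τV) ≤ c₂ * N ^ 2 :=
          hfW _ (by linarith) (by linarith)
        have h2 : B t ≤ B σ * Real.exp (γ' * ((k:ℝ) * τV)) := by
          have hsh := hBshift σ (σ - t)
          rw [show σ - (σ - t) = t by ring] at hsh
          rw [hsh]
          apply mul_le_mul_of_nonneg_left _ (hBpos σ).le
          exact Real.exp_le_exp.mpr
            (mul_le_mul_of_nonneg_left (show σ - t ≤ (k:ℝ) * τV by linarith) hγ'0.le)
        calc f (σ - k * τV) ≤ c₂ * N ^ 2 := h1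
          _ ≤ C := by rw [hC_def]; linarith
          _ = B t := hBt.symm
          _ ≤ B σ * Real.exp (γ' * ((k:ℝ) * τV)) := h2
          _ ≤ B σ * q := mul_le_mul_of_nonneg_left hexpq (hBpos σ).le
          _ = q * B σ := mul_comm _ _
    have hσtf : (σ : EReal) < tf := hlt_tf σ hσs
    have hderiv : derivWithin f (Ici (0:ℝ)) σ ≤ -α * f σ := hdecay σ hσ0 hσtf hRaz
    have hdiff : DifferentiableWithinAt ℝ f (Ici (0:ℝ)) σ :=
      DifferentiableAt.comp_differentiableWithinAt σ (hV (x σ)) (hxd σ hσ0 hσtf)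
    have hfd : HasDerivWithinAt f (derivWithin f (Ici (0:ℝ)) σ) (Ici σ) σ :=
      hdiff.hasDerivWithinAt.mono (Ici_subset_Ici.mpr hσ0)
    have hBd : HasDerivAt B (-γ' * B σ) σ := by
      have h1 : HasDerivAt (fun u : ℝ => -γ' * (u - t)) (-γ') σ := by
        simpa using ((hasDerivAt_id σ).sub_const t).const_mul (-γ')
      have h2 := (h1.exp).const_mul C
      rw [hB_def]
      refine h2.congr_deriv ?_
      beta_reduce
      ring
    set g : ℝ → ℝ := fun u => f u - B u with hg_def
    have hgd : HasDerivWithinAt g (derivWithin f (Ici (0:ℝ)) σ - (-γ' * B σ)) (Ici σ) σ :=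
      hfd.sub (hBd.hasDerivWithinAt)
    have hgneg : derivWithin f (Ici (0:ℝ)) σ - (-γ' * B σ) < 0 := by
      have h1 : derivWithin f (Ici (0:ℝ)) σ ≤ -α * B σ := by rw [← heq]; exact hderiv
      have hγ'α : γ' < α := by rw [hγ'_def]; linarith
      have h2 : γ' * B σ < α * B σ := mul_lt_mul_of_pos_right hγ'α (hBpos σ)
      linarith
    rw [hasDerivWithinAt_iff_tendsto_slope, Ici_sdiff_left] at hgd
    have hev : ∀ᶠ u in 𝓝[>] σ, slope g σ u < 0 :=
      hgd.eventually (eventually_lt_nhds hgneg)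
    have hfreq : ∃ᶠ u in 𝓝[>] σ, u ∈ S := by
      rw [(nhdsGT_basis σ).frequently_iff]
      intro b hb
      obtain ⟨a, haS, halt⟩ := Real.lt_sInf_add_pos hSne (show (0:ℝ) < b - σ by linarith)
      have h1 : σ ≤ a := csInf_le hSbdd haS
      have h2 : σ < a := lt_of_le_of_ne h1 fun h => hσnotS (h ▸ haS)
      exact ⟨a, ⟨h2, by rw [← hσ_def] at halt; linarith⟩, haS⟩
    obtain ⟨u, huS, hu_slope, hu_gt⟩ := (hfreq.and_eventually
      (hev.and eventually_mem_nhdsWithin)).exists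
    have hgu : 0 < g u := by rw [hg_def]; simp only; linarith [huS.2]
    have hgσ : g σ = 0 := by rw [hg_def]; simp only; linarith [heq.le, heq.ge]
    have hpos : 0 < slope g σ u := by
      rw [slope_def_field, hgσ, sub_zero]
      exact div_pos hgu (by simpa using sub_pos.mpr (mem_Ioi.mp hu_gt))
    linarith
  -- take the limit δ → 0⁺
  have hmain : f s ≤ c₂ * N ^ 2 * Real.exp (-γb * (s - t)) := by
    have htend : Filter.Tendsto (fun δ : ℝ => (c₂ * N ^ 2 + δ) * Real.exp (-(γb - δ) * (s - t)))
        (𝓝[>] 0) (𝓝 ((c₂ * N ^ 2 + 0) * Real.exp (-(γb - 0) * (s - t)))) := by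
      apply Filter.Tendsto.mono_left _ nhdsWithin_le_nhds
      exact Continuous.tendsto (by fun_prop) 0
    have hev : ∀ᶠ δ in 𝓝[>] (0:ℝ),
        f s ≤ (c₂ * N ^ 2 + δ) * Real.exp (-(γb - δ) * (s - t)) := by
      filter_upwards [Ioo_mem_nhdsGT_of_mem
        (⟨le_rfl, hγb_pos⟩ : (0:ℝ) ∈ Ico 0 γb)] with δ hδ
      exact hkey δ hδ.1 hδ.2
    have hfin := ge_of_tendsto htend hev
    simpa using hfin
  -- conclude
  have hsand_s := hsandwich s (by linarith) hstf
  set E : ℝ := Real.exp (-(γb / 2) * (s - t)) with hE_def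
  have hE0 : 0 < E := Real.exp_pos _
  have hE2 : E ^ 2 = Real.exp (-γb * (s - t)) := by
    rw [hE_def, sq, ← Real.exp_add]
    congr 1
    ring
  rcases eq_or_lt_of_le (norm_nonneg (x s)) with hzero | hpos
  · rw [← hzero]
    exact mul_nonneg (by positivity) hN0
  · have hxsq : 0 < ‖x s‖ ^ 2 := by positivity
    have hc12 : c₁ ≤ c₂ := by
      have h := le_trans hsand_s.1 hsand_s.2
      exact (mul_le_mul_iff_of_pos_right hxsq).mp h
    have hfs : f s = V (x s) := rfl
    have hA : ‖x s‖ ^ 2 ≤ (c₂ / c₁) * (N ^ 2 * E ^ 2) := by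
      rw [div_mul_eq_mul_div, le_div_iff₀ hc₁, hE2]
      linarith [hsand_s.1, hmain, hfs.le, hfs.ge]
    have hd1 : (1:ℝ) ≤ c₂ / c₁ := (one_le_div hc₁).mpr hc12
    have hrhs0 : 0 ≤ c₂ / c₁ * E * N := mul_nonneg (by positivity) hN0
    refine le_of_pow_le_pow_left₀ two_ne_zero hrhs0 ?_
    have hEN : 0 ≤ N ^ 2 * E ^ 2 := by positivity
    have hd0 : (0:ℝ) ≤ c₂ / c₁ := by positivity
    calc ‖x s‖ ^ 2 ≤ (c₂ / c₁) * (N ^ 2 * E ^ 2) := hA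
      _ ≤ (c₂ / c₁ * (c₂ / c₁)) * (N ^ 2 * E ^ 2) :=
        mul_le_mul_of_nonneg_right (le_mul_of_one_le_left hd0 hd1) hEN
      _ = (c₂ / c₁ * E * N) ^ 2 := by ring
end

section
/- Let d > 0 and let σ : ℝ → ℝ be given by σ(x) = 0 for x ≤ 0, σ(x) = x³/d² − x⁴/(2d³) for 0 ≤ x ≤ d, and σ(x) = x − d/2 for x ≥ d. Then σ(y) ≤ y²/d for all y ∈ ℝ. Consequently, if n ∈ ℕ, g : ℝⁿ → ℝ is L-Lipschitz (with respect to the Euclidean norm) and c > 0, then the function V : ℝⁿ → ℝ defined by V(x) = σ(g(x) − g(0)) + c·‖x‖₂² satisfies the quadratic sandwich bounds c·‖x‖₂² ≤ V(x) ≤ (c + L²/d)·‖x‖₂² for all x ∈ ℝⁿ. -/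
/-- The smoothed ReLU activation of the paper (with the corrected denominator `2d³`). -/
noncomputable def smoothedReLU (d : ℝ) (x : ℝ) : ℝ :=
  if x ≤ 0 then 0
  else if x ≤ d then x ^ 3 / d ^ 2 - x ^ 4 / (2 * d ^ 3)
  else x - d / 2

lemma smoothedReLU_nonneg {d : ℝ} (hd : 0 < d) (y : ℝ) : 0 ≤ smoothedReLU d y := by
  unfold smoothedReLU
  split_ifs with h1 h2
  · exact le_refl 0
  · push_neg at h1
    rw [div_sub_div _ _ (by positivity) (by positivity)]
    apply div_nonneg _ (by positivity)
    nlinarith [mul_le_mul_of_nonneg_left h2 (mul_pos (pow_pos h1 3) (pow_pos hd 2)).le, mul_pos (pow_pos h1 3) (pow_pos hd 3)]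
  · push_neg at h1 h2
    nlinarith

lemma smoothedReLU_le {d : ℝ} (hd : 0 < d) (y : ℝ) : smoothedReLU d y ≤ y ^ 2 / d := by
  unfold smoothedReLU
  split_ifs with h1 h2
  · positivity
  · push_neg at h1
    rw [div_sub_div _ _ (by positivity) (by positivity), div_le_div_iff₀ (by positivity) hd]
    nlinarith [mul_le_mul_of_nonneg_left h2 (mul_pos (pow_pos h1 2) (pow_pos hd 4)).le, pow_nonneg h1.le 4, pow_pos hd 3]
  · push_neg at h1 h2
    rw [le_div_iff₀ hd]
    nlinarith

lemma smoothedReLU_mono {d : ℝ} (hd : 0 < d) {a b : ℝ} (hab : a ^ 2 ≤ b) :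
    smoothedReLU d a ≤ b / d :=
  le_trans (smoothedReLU_le hd a) (by gcongr)

/-- The smoothed ReLU is bounded by `y²/d`; consequently, the Lyapunov neural network
candidate `V(x) = σ(g(x) - g(0)) + c‖x‖²` built from an `L`-Lipschitz function `g`
satisfies the quadratic sandwich bounds `c‖x‖² ≤ V(x) ≤ (c + L²/d)‖x‖²`. -/
theorem smoothedReLU_quadratic_sandwich {d : ℝ} (hd : 0 < d) :
    (∀ y : ℝ, smoothedReLU d y ≤ y ^ 2 / d) ∧
    ∀ (n : ℕ) (g : EuclideanSpace ℝ (Fin n) → ℝ) (L : ℝ) (hL : 0 ≤ L),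
      LipschitzWith ⟨L, hL⟩ g → ∀ c : ℝ, 0 < c →
        ∀ x : EuclideanSpace ℝ (Fin n),
          c * ‖x‖ ^ 2 ≤ smoothedReLU d (g x - g 0) + c * ‖x‖ ^ 2 ∧
          smoothedReLU d (g x - g 0) + c * ‖x‖ ^ 2 ≤ (c + L ^ 2 / d) * ‖x‖ ^ 2 := by
  refine ⟨smoothedReLU_le hd, fun n g L hL hlip c hc x => ?_⟩
  constructor
  · linarith [smoothedReLU_nonneg hd (g x - g 0)]
  · have hdist : |g x - g 0| ≤ L * ‖x‖ := by
      have := hlip.dist_le_mul x 0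
      simp [Real.dist_eq, dist_eq_norm] at this
      exact this
    have h2 : (g x - g 0) ^ 2 ≤ (L * ‖x‖) ^ 2 := by
      have := sq_abs (g x - g 0)
      nlinarith [abs_nonneg (g x - g 0), norm_nonneg x]
    have := smoothedReLU_le hd (g x - g 0)
    have h3 : (g x - g 0) ^ 2 / d ≤ (L * ‖x‖) ^ 2 / d := by gcongr
    have : smoothedReLU d (g x - g 0) ≤ L ^ 2 / d * ‖x‖ ^ 2 := by
      calc smoothedReLU d (g x - g 0) ≤ (g x - g 0) ^ 2 / d := smoothedReLU_le hd _
        _ ≤ (L * ‖x‖) ^ 2 / d := h3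
        _ = L ^ 2 / d * ‖x‖ ^ 2 := by ring
    linarith
end
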